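/- arXiv:2212.02380 — 7 statements merged into one kernel-verified Lean document; each statement's English description precedes it below -/
import Mathlib

section
/- Let S = (D, −, Σ, Σ₀, (D_a)_{a∈Σ}) be a signature and let (x_a)_{a∈Σ} be a vector of non-negative integers. Then there exists a graph over the signature S having exactly x_a nodes labelled with a, for every a ∈ Σ, if and only if the vector (x_a)_{a∈Σ} is balanced, that is: (1) ∑_{a∈Σ₀} x_a = 1, and (2) for every direction d ∈ D with d ≠ −d, ∑_{a∈Σ : d∈D_a} x_a = ∑_{a∈Σ : −d∈D_a} x_a. -/
/-- A signature `S = (D, −, Σ, Σ₀, (D_a)_{a∈Σ})`: a finite set `D` of directions with an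
involution `neg`, a finite set `Lab` of node labels, a set `init ⊆ Lab` of initial labels,
and for each label `a` a set `Da a ⊆ D` of directions used at nodes labelled `a`. -/
structure Signature where
  D : Type
  [fintypeD : Fintype D]
  [decEqD : DecidableEq D]
  neg : D → D
  neg_neg : ∀ d, neg (neg d) = d
  Lab : Type
  [fintypeLab : Fintype Lab]
  [decEqLab : DecidableEq Lab]
  init : Finset Lab
  Da : Lab → Finset D

attribute [instance] Signature.fintypeD Signature.decEqD Signature.fintypeLab Signature.decEqLab

/-- A (finite) graph over a signature `S`: nodes are `Fin n`, `v0` is the initial node,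
`edge` is the partial function `+ : V × D ⇀ V`, and `lab` the labelling. -/
structure SigGraph (S : Signature) where
  n : ℕ
  v0 : Fin n
  edge : Fin n → S.D → Option (Fin n)
  lab : Fin n → S.Lab
  edge_sym : ∀ v d u, edge v d = some u → edge u (S.neg d) = some v
  edge_dom : ∀ v d, (edge v d).isSome ↔ d ∈ S.Da (lab v)
  init_iff : ∀ v, lab v ∈ S.init ↔ v = v0

/-- The neighbour of `v` in direction `d` (defined whenever `d ∈ D_{λ(v)}`). -/
def SigGraph.nbr {S : Signature} (G : SigGraph S) (v : Fin G.n) (d : S.D)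
    (h : d ∈ S.Da (G.lab v)) : Fin G.n :=
  (G.edge v d).get ((G.edge_dom v d).mpr h)

/-- The number of nodes of `G` labelled with `a`. -/
def SigGraph.numLab {S : Signature} (G : SigGraph S) (a : S.Lab) : ℕ :=
  (Finset.univ.filter fun v : Fin G.n => G.lab v = a).card

/-- Two graphs (over possibly different signatures) have the same set of nodes, the same
initial node and the same edge structure (each pair of nodes is connected by the same
number of edges); only node labels and direction labels may differ. -/
def SameSkeleton {S S' : Signature} (G : SigGraph S) (G' : SigGraph S') : Prop :=
  ∃ h : G.n = G'.n,
    ((G.v0 : ℕ) = (G'.v0 : ℕ)) ∧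
    ∀ u w : Fin G.n,
      (Finset.univ.filter fun d : S.D => G.edge u d = some w).card
        = (Finset.univ.filter fun d' : S'.D =>
            G'.edge (Fin.cast h u) d' = some (Fin.cast h w)).card

/-- A star automaton over `S`: a finite set of states `Q` and a finite set `T` of stars.
A star `(a, q, q₁, …, q_{|D_a|})` is encoded as a label `a`, a centre state `q`, and the
assignment `d ↦ q_d` of states to the rays, one for each direction `d ∈ D_a`. -/
structure StarAutomaton (S : Signature) where
  Q : Type
  [fintypeQ : Fintype Q]
  [decEqQ : DecidableEq Q]
  T : Finset (Σ a : S.Lab, Q × ({d // d ∈ S.Da a} → Q))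

attribute [instance] StarAutomaton.fintypeQ StarAutomaton.decEqQ

/-- A computation of a star automaton on a graph: a choice of states in all nodes such that
the star around every node belongs to `T`. -/
def StarAutomaton.IsComputation {S : Signature} (A : StarAutomaton S) (G : SigGraph S)
    (q : Fin G.n → A.Q) : Prop :=
  ∀ v : Fin G.n,
    (⟨G.lab v, (q v, fun d : {d // d ∈ S.Da (G.lab v)} => q (G.nbr v d.1 d.2))⟩ :
        Σ a : S.Lab, A.Q × ({d // d ∈ S.Da a} → A.Q)) ∈ A.T

/-- A star automaton accepts a graph if it has at least one computation on it. -/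
def StarAutomaton.Accepts {S : Signature} (A : StarAutomaton S) (G : SigGraph S) : Prop :=
  ∃ q : Fin G.n → A.Q, A.IsComputation G q

/-- A deterministic graph-walking automaton over `S`. -/
structure GWA (S : Signature) where
  Q : Type
  [fintypeQ : Fintype Q]
  [decEqQ : DecidableEq Q]
  q0 : Q
  F : Finset (Q × S.Lab)
  δ : Q × S.Lab → Option (Q × S.D)
  δ_not_F : ∀ q a p, δ (q, a) = some p → (q, a) ∉ F
  δ_dir : ∀ q a p, δ (q, a) = some p → p.2 ∈ S.Da a

attribute [instance] GWA.fintypeQ GWA.decEqQ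

/-- One step of a graph-walking automaton on a graph, as a relation on configurations. -/
def GWA.Step {S : Signature} (A : GWA S) (G : SigGraph S)
    (c c' : A.Q × Fin G.n) : Prop :=
  ∃ (q' : A.Q) (d : S.D) (h : d ∈ S.Da (G.lab c.2)),
    A.δ (c.1, G.lab c.2) = some (q', d) ∧ c' = (q', G.nbr c.2 d h)

/-- A graph-walking automaton accepts a graph if its (unique) computation from the initial
configuration reaches an accepting configuration. -/
def GWA.Accepts {S : Signature} (A : GWA S) (G : SigGraph S) : Prop :=
  ∃ c : A.Q × Fin G.n,
    Relation.ReflTransGen (A.Step G) (A.q0, G.v0) c ∧ (c.1, G.lab c.2) ∈ A.F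

namespace Stmt0Aux

open Finset

lemma card_fiber {L : Type*} [DecidableEq L] {n : ℕ} (lab : Fin n → L) (t : Finset L) :
    (Finset.univ.filter fun v => lab v ∈ t).card
      = ∑ a ∈ t, (Finset.univ.filter fun v => lab v = a).card := by
  rw [Finset.card_eq_sum_card_fiberwise (f := lab) (s := Finset.univ.filter fun v => lab v ∈ t) (t := t)
    (fun v hv => (Finset.mem_filter.mp hv).2)]
  refine Finset.sum_congr rfl fun a ha => ?_
  congr 1
  ext v
  simp only [Finset.mem_filter, Finset.mem_univ, true_and]
  constructor
  · rintro ⟨-, h⟩; exact h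
  · intro h; exact ⟨h ▸ ha, h⟩

lemma nbr_edge {S : Signature} (G : SigGraph S) (v : Fin G.n) (d : S.D)
    (h : d ∈ S.Da (G.lab v)) : G.edge v d = some (G.nbr v d h) :=
  (Option.some_get _).symm

lemma nbr_mem {S : Signature} (G : SigGraph S) (v : Fin G.n) (d : S.D)
    (h : d ∈ S.Da (G.lab v)) : S.neg d ∈ S.Da (G.lab (G.nbr v d h)) := by
  rw [← G.edge_dom, G.edge_sym v d _ (nbr_edge G v d h)]
  rfl

lemma nbr_nbr {S : Signature} (G : SigGraph S) (v : Fin G.n) (d : S.D)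
    (h : d ∈ S.Da (G.lab v)) :
    G.nbr (G.nbr v d h) (S.neg d) (nbr_mem G v d h) = v := by
  have h2 := G.edge_sym v d _ (nbr_edge G v d h)
  unfold SigGraph.nbr at h2 ⊢
  simp [h2]

lemma nbr_congr {S : Signature} (G : SigGraph S) {v : Fin G.n} {d d' : S.D}
    (h : d = d') (hd : d ∈ S.Da (G.lab v)) (hd' : d' ∈ S.Da (G.lab v)) :
    G.nbr v d hd = G.nbr v d' hd' := by subst h; rfl

variable (S : Signature) (x : S.Lab → ℕ)

def bn : ℕ := Fintype.card (Σ a : S.Lab, Fin (x a))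

noncomputable def be : Fin (bn S x) ≃ Σ a : S.Lab, Fin (x a) :=
  (Fintype.equivFin _).symm

noncomputable def blab (v : Fin (bn S x)) : S.Lab := (be S x v).1

def fiberEquiv (a : S.Lab) : {p : Σ b : S.Lab, Fin (x b) // p.1 = a} ≃ Fin (x a) where
  toFun p := Fin.cast (congrArg x p.2) p.1.2
  invFun i := ⟨⟨a, i⟩, rfl⟩
  left_inv := by rintro ⟨⟨b, i⟩, rfl⟩; rfl
  right_inv i := rfl

lemma blab_card (a : S.Lab) :
    (Finset.univ.filter fun v => blab S x v = a).card = x a := by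
  rw [← Fintype.card_subtype]
  exact (Fintype.card_congr
    ((Equiv.subtypeEquiv (be S x) (fun v => Iff.rfl)).trans (fiberEquiv S x a))).trans
    (Fintype.card_fin _)

noncomputable def bA (d : S.D) : Finset (Fin (bn S x)) :=
  Finset.univ.filter fun v => d ∈ S.Da (blab S x v)

lemma bA_card (d : S.D) :
    (bA S x d).card = ∑ a ∈ Finset.univ.filter (fun a => d ∈ S.Da a), x a := by
  have h : bA S x d
      = Finset.univ.filter fun v =>
          blab S x v ∈ Finset.univ.filter (fun a => d ∈ S.Da a) := by
    ext v; simp [bA]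
  rw [h, card_fiber]
  exact Finset.sum_congr rfl fun a _ => blab_card S x a

noncomputable def brk (d : S.D) : ℕ := (Fintype.equivFin S.D d : ℕ)

lemma brk_inj : Function.Injective (brk S) := fun d d' h =>
  (Fintype.equivFin S.D).injective (Fin.val_injective h)

end Stmt0Aux

open Stmt0Aux in
/-- A graph over a signature `S` with exactly `x a` nodes labelled `a` (for every label `a`)
exists if and only if the vector `(x a)` is balanced: the initial labels are used exactly
once in total, and for every direction `d` with `d ≠ −d`, the total demand for edge
end-points in direction `d` equals that in direction `−d`. -/
theorem stmt0 (S : Signature) (x : S.Lab → ℕ) :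
    (∃ G : SigGraph S, ∀ a : S.Lab, G.numLab a = x a) ↔
      ((∑ a ∈ S.init, x a = 1) ∧
        ∀ d : S.D, S.neg d ≠ d →
          ∑ a ∈ Finset.univ.filter (fun a : S.Lab => d ∈ S.Da a), x a
            = ∑ a ∈ Finset.univ.filter (fun a : S.Lab => S.neg d ∈ S.Da a), x a) := by
  classical
  constructor
  · rintro ⟨G, hG⟩
    constructor
    · have hh1 : ∑ a ∈ S.init, x a
          = (Finset.univ.filter fun v => G.lab v ∈ S.init).card := by
        rw [card_fiber]
        refine Finset.sum_congr rfl fun a _ => ?_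
        exact (hG a).symm
      have hh2 : (Finset.univ.filter fun v => G.lab v ∈ S.init) = {G.v0} := by
        ext v
        simp [G.init_iff v]
      rw [hh1, hh2, Finset.card_singleton]
    · intro d _
      have key : ∀ e : S.D,
          ∑ a ∈ Finset.univ.filter (fun a : S.Lab => e ∈ S.Da a), x a
            = (Finset.univ.filter fun v => e ∈ S.Da (G.lab v)).card := by
        intro e
        have h1 : (Finset.univ.filter fun v => e ∈ S.Da (G.lab v))
            = Finset.univ.filter fun v =>
                G.lab v ∈ Finset.univ.filter (fun a : S.Lab => e ∈ S.Da a) := by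
          ext v; simp
        rw [h1, card_fiber]
        refine Finset.sum_congr rfl fun a _ => ?_
        exact (hG a).symm
      rw [key d, key (S.neg d)]
      refine Finset.card_bij'
        (fun v hv => G.nbr v d ((Finset.mem_filter.mp hv).2))
        (fun u hu => G.nbr u (S.neg d) ((Finset.mem_filter.mp hu).2)) ?_ ?_ ?_ ?_
      · intro v hv
        simp only [Finset.mem_filter, Finset.mem_univ, true_and]
        exact nbr_mem G v d _
      · intro u hu
        simp only [Finset.mem_filter, Finset.mem_univ, true_and]
        have h := nbr_mem G u (S.neg d) ((Finset.mem_filter.mp hu).2)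
        rwa [S.neg_neg] at h
      · intro v hv
        exact nbr_nbr G v d _
      · intro u hu
        have h := nbr_nbr G u (S.neg d) ((Finset.mem_filter.mp hu).2)
        exact (nbr_congr G (S.neg_neg d).symm _ _).trans h
  · rintro ⟨h1, h2⟩
    have hc : ∀ d : S.D, S.neg d ≠ d →
        (bA S x d).card = (bA S x (S.neg d)).card := by
      intro d hd
      rw [bA_card, bA_card]
      exact h2 d hd
    have key : ∀ d : S.D, ∃ f g : Fin (bn S x) → Fin (bn S x),
        S.neg d ≠ d → brk S d < brk S (S.neg d) →
          (∀ v ∈ bA S x d, f v ∈ bA S x (S.neg d)) ∧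
          (∀ u ∈ bA S x (S.neg d), g u ∈ bA S x d) ∧
          (∀ v ∈ bA S x d, g (f v) = v) ∧
          (∀ u ∈ bA S x (S.neg d), f (g u) = u) := by
      intro d
      by_cases hd : S.neg d ≠ d
      · have e : {v // v ∈ bA S x d} ≃ {v // v ∈ bA S x (S.neg d)} :=
          Finset.equivOfCardEq (hc d hd)
        refine ⟨fun v => if hv : v ∈ bA S x d then (e ⟨v, hv⟩).1 else v,
          fun u => if hu : u ∈ bA S x (S.neg d) then (e.symm ⟨u, hu⟩).1 else u,
          fun _ _ => ⟨?_, ?_, ?_, ?_⟩⟩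
        · intro v hv; simp only [dif_pos hv]; exact (e ⟨v, hv⟩).2
        · intro u hu; simp only [dif_pos hu]; exact (e.symm ⟨u, hu⟩).2
        · intro v hv
          simp only [dif_pos hv, dif_pos (e ⟨v, hv⟩).2]
          simp
        · intro u hu
          simp only [dif_pos hu, dif_pos (e.symm ⟨u, hu⟩).2]
          simp
      · exact ⟨id, id, fun h _ => absurd h hd⟩
    choose f g hfg using key
    obtain ⟨F, hFdef⟩ : ∃ F : S.D → Fin (bn S x) → Fin (bn S x), ∀ d v,
        F d v = if S.neg d = d then v
          else if brk S d < brk S (S.neg d) then f d v else g (S.neg d) v :=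
      ⟨_, fun d v => rfl⟩
    have Fspec : ∀ d : S.D, ∀ v ∈ bA S x d,
        F d v ∈ bA S x (S.neg d) ∧ F (S.neg d) (F d v) = v := by
      intro d v hv
      by_cases hself : S.neg d = d
      · have hself' : S.neg (S.neg d) = S.neg d := by rw [hself, hself]
        constructor
        · rw [hFdef, if_pos hself, hself]; exact hv
        · rw [hFdef d v, if_pos hself, hFdef (S.neg d) v, if_pos hself']
      · have hne' : S.neg (S.neg d) ≠ S.neg d := by
          intro h
          exact hself (by
            have h2 := congrArg S.neg h
            rwa [S.neg_neg, S.neg_neg] at h2)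
        have hbrkne : brk S d ≠ brk S (S.neg d) := fun h =>
          hself ((brk_inj S h).symm)
        by_cases hlt : brk S d < brk S (S.neg d)
        · obtain ⟨hm, hgm, hgf, hfgi⟩ := hfg d hself hlt
          have hFd : F d v = f d v := by
            rw [hFdef, if_neg hself, if_pos hlt]
          have hmem : F d v ∈ bA S x (S.neg d) := hFd ▸ hm v hv
          refine ⟨hmem, ?_⟩
          have hnotlt : ¬ brk S (S.neg d) < brk S (S.neg (S.neg d)) := by
            rw [S.neg_neg]; omega
          rw [hFdef (S.neg d) (F d v), if_neg hne', if_neg hnotlt, S.neg_neg, hFd]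
          exact hgf v hv
        · have hlt' : brk S (S.neg d) < brk S d :=
            lt_of_le_of_ne (not_lt.mp hlt) fun h => hbrkne h.symm
          have hlt'' : brk S (S.neg d) < brk S (S.neg (S.neg d)) := by
            rwa [S.neg_neg]
          obtain ⟨hm, hgm, hgf, hfgi⟩ := hfg (S.neg d) hne' hlt''
          simp only [S.neg_neg] at hm hgm hgf hfgi
          have hFd : F d v = g (S.neg d) v := by
            rw [hFdef, if_neg hself, if_neg hlt]
          have hmem : F d v ∈ bA S x (S.neg d) := hFd ▸ hgm v hv
          refine ⟨hmem, ?_⟩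
          rw [hFdef (S.neg d) (F d v), if_neg hne', if_pos hlt'', hFd]
          exact hfgi v hv
    have hinit : (Finset.univ.filter fun v => blab S x v ∈ S.init).card = 1 := by
      rw [card_fiber, ← h1]
      exact Finset.sum_congr rfl fun a _ => blab_card S x a
    obtain ⟨v0, hv0⟩ := Finset.card_eq_one.mp hinit
    refine ⟨⟨bn S x, v0,
      fun v d => if _ : d ∈ S.Da (blab S x v) then some (F d v) else none,
      blab S x, ?_, ?_, ?_⟩, ?_⟩
    · -- edge_sym
      intro v d u h
      by_cases hd : d ∈ S.Da (blab S x v)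
      · rw [dif_pos hd] at h
        have hu : u = F d v := (Option.some_injective _ h).symm
        have hv : v ∈ bA S x d := Finset.mem_filter.mpr ⟨Finset.mem_univ v, hd⟩
        obtain ⟨hmem, hinv⟩ := Fspec d v hv
        have hd' : S.neg d ∈ S.Da (blab S x u) := by
          rw [hu]; exact (Finset.mem_filter.mp hmem).2
        rw [dif_pos hd', hu, hinv]
      · rw [dif_neg hd] at h
        exact absurd h (by simp)
    · -- edge_dom
      intro v d
      by_cases hd : d ∈ S.Da (blab S x v) <;> simp [hd]
    · -- init_iff
      intro v
      have h : v ∈ (Finset.univ.filter fun w => blab S x w ∈ S.init)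
          ↔ v ∈ ({v0} : Finset _) := by rw [hv0]
      simpa using h
    · intro a
      exact blab_card S x a
end

section
/- Let n ≥ 1 be an integer, let v₁, …, v_ℓ ∈ {0, 1, −1}^n be pairwise distinct non-zero column vectors of height n, let b ∈ {0, 1, −1}^n be a column vector, and let k be the maximum number of non-zero entries in any of the vectors v₁, …, v_ℓ. If the equation ∑_{i=1}^ℓ x_i v_i = b has at least one solution in non-negative integers, then it has a non-negative integer solution (x_1, …, x_ℓ) with ∑_{i=1}^ℓ x_i ≤ 2·ℓ·n·min{n^n, k^{2n−2}}. -/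
set_option maxHeartbeats 1000000
open Matrix

open Matrix in
lemma aux_hadamard_sq (m : ℕ) (M : Matrix (Fin m) (Fin m) ℤ)
    (h : ∀ i j, |M i j| ≤ 1) : M.det ^ 2 ≤ (m : ℤ) ^ m := by
  rcases Nat.eq_zero_or_pos m with hm | hm
  · subst hm; simp
  have hmR : (0:ℝ) < m := by exact_mod_cast hm
  set A : Matrix (Fin m) (Fin m) ℝ := M.map (Int.cast) with hA
  have hdetA : A.det = (M.det : ℝ) := (RingHom.map_det (Int.castRingHom ℝ) M).symm
  set G : Matrix (Fin m) (Fin m) ℝ := A * Aᴴ with hGdef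
  have hG : G.PosSemidef := posSemidef_self_mul_conjTranspose A
  have hH : G.IsHermitian := hG.1
  set lam : Fin m → ℝ := hH.eigenvalues with hlam
  have hlam0 : ∀ i, 0 ≤ lam i := hG.eigenvalues_nonneg
  have hdetG : G.det = ∏ i, lam i := by
    simpa using hH.det_eq_prod_eigenvalues
  have htrace : G.trace = ∑ i, lam i := by
    have h1 := hH.spectral_theorem
    have h2 : (star (hH.eigenvectorUnitary : Matrix (Fin m) (Fin m) ℝ)) *
        (hH.eigenvectorUnitary : Matrix (Fin m) (Fin m) ℝ) = 1 :=
      (Matrix.mem_unitaryGroup_iff').mp (hH.eigenvectorUnitary).2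
    calc G.trace = ((hH.eigenvectorUnitary : Matrix (Fin m) (Fin m) ℝ) *
          (Matrix.diagonal (RCLike.ofReal ∘ hH.eigenvalues)) *
          (star (hH.eigenvectorUnitary : Matrix (Fin m) (Fin m) ℝ))).trace := by
            rw [Unitary.conjStarAlgAut_apply] at h1; exact congrArg Matrix.trace h1
      _ = ∑ i, lam i := by
          rw [Matrix.trace_mul_cycle, h2, Matrix.one_mul, Matrix.trace_diagonal]
          simp [hlam]
  have htrace_le : G.trace ≤ (m : ℝ) * m := by
    rw [Matrix.trace]
    have : ∀ i : Fin m, G i i ≤ (m : ℝ) := by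
      intro i
      rw [hGdef, Matrix.mul_apply]
      have : ∀ j : Fin m, A i j * Aᴴ j i ≤ 1 := by
        intro j
        have h1 : Aᴴ j i = A i j := by simp [Matrix.conjTranspose_apply]
        have h2 : A i j = (M i j : ℝ) := rfl
        rw [h1, h2, ← sq]
        have : |(M i j : ℝ)| ≤ 1 := by exact_mod_cast h i j
        nlinarith [abs_nonneg ((M i j : ℝ)), sq_abs ((M i j:ℝ))]
      calc ∑ j, A i j * Aᴴ j i ≤ ∑ _j : Fin m, (1:ℝ) := Finset.sum_le_sum fun j _ => this j
        _ = m := by simp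
    calc ∑ i, G.diag i ≤ ∑ _i : Fin m, (m:ℝ) := Finset.sum_le_sum fun i _ => this i
      _ = (m:ℝ) * m := by simp [mul_comm]
  -- AM-GM
  have hamgm := Real.geom_mean_le_arith_mean_weighted Finset.univ (fun _ => 1 / m) lam
    (fun i _ => by positivity) (by simp; field_simp) (fun i _ => hlam0 i)
  have hsum : ∑ i, (1/m : ℝ) * lam i = G.trace / m := by
    rw [htrace, Finset.sum_div]
    exact Finset.sum_congr rfl fun i _ => by ring
  have hrhs : G.trace / m ≤ m := by
    rw [div_le_iff₀ hmR]
    exact htrace_le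
  have hprod : ∏ i, lam i ≤ (m:ℝ) ^ m := by
    have hL : (∏ i, lam i ^ (1/m : ℝ)) ^ (m:ℕ) = ∏ i, lam i := by
      rw [← Finset.prod_pow]
      refine Finset.prod_congr rfl fun i _ => ?_
      rw [← Real.rpow_natCast (lam i ^ (1/m:ℝ)) m, ← Real.rpow_mul (hlam0 i)]
      field_simp
      simp
    have h0 : (0:ℝ) ≤ ∏ i, lam i ^ (1/m : ℝ) :=
      Finset.prod_nonneg fun i _ => Real.rpow_nonneg (hlam0 i) _
    calc ∏ i, lam i = (∏ i, lam i ^ (1/m : ℝ)) ^ (m:ℕ) := hL.symm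
      _ ≤ (m:ℝ) ^ (m:ℕ) := by
          apply pow_le_pow_left₀ h0
          calc ∏ i, lam i ^ (1/m : ℝ) ≤ ∑ i, (1/m : ℝ) * lam i := hamgm
            _ = G.trace / m := hsum
            _ ≤ m := hrhs
  have hdet2 : (M.det : ℝ) ^ 2 ≤ (m:ℝ) ^ m := by
    have : G.det = (M.det : ℝ) ^ 2 := by
      rw [hGdef, Matrix.det_mul, Matrix.det_conjTranspose, hdetA]
      simp [sq]
    rw [← this, hdetG]
    exact hprod
  exact_mod_cast hdet2


def auxDM (n ℓ : ℕ) (v : Fin ℓ → Fin n → ℤ) (b : Fin n → ℤ) (m : ℕ)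
    (e : Fin m → Fin n) (g : Fin m → Fin ℓ ⊕ Unit) : Matrix (Fin m) (Fin m) ℤ :=
  Matrix.of fun t a => Sum.elim v (fun _ => b) (g a) (e t)

noncomputable def auxD (n ℓ : ℕ) (v : Fin ℓ → Fin n → ℤ) (b : Fin n → ℤ) : ℕ :=
  Finset.univ.sup
    fun p : (Σ m : Fin (n+1), (Fin (m:ℕ) ↪ Fin n) × ((Fin (m:ℕ)) → Fin ℓ ⊕ Unit)) =>
      (auxDM n ℓ v b (p.1:ℕ) p.2.1 p.2.2).det.natAbs

lemma le_auxD (n ℓ : ℕ) (v : Fin ℓ → Fin n → ℤ) (b : Fin n → ℤ) (m : ℕ) (hm : m ≤ n)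
    (e : Fin m → Fin n) (he : Function.Injective e) (g : Fin m → Fin ℓ ⊕ Unit) :
    (auxDM n ℓ v b m e g).det.natAbs ≤ auxD n ℓ v b := by
  have h := Finset.le_sup
    (f := fun p : (Σ m : Fin (n+1), (Fin (m:ℕ) ↪ Fin n) × ((Fin (m:ℕ)) → Fin ℓ ⊕ Unit)) =>
      (auxDM n ℓ v b (p.1:ℕ) p.2.1 p.2.2).det.natAbs)
    (Finset.mem_univ (⟨⟨m, by omega⟩, ⟨e, he⟩, g⟩ :
      (Σ m : Fin (n+1), (Fin (m:ℕ) ↪ Fin n) × ((Fin (m:ℕ)) → Fin ℓ ⊕ Unit))))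
  exact h

lemma one_le_auxD (n ℓ : ℕ) (v : Fin ℓ → Fin n → ℤ) (b : Fin n → ℤ) :
    1 ≤ auxD n ℓ v b := by
  have := le_auxD n ℓ v b 0 (Nat.zero_le n) Fin.elim0 (fun a => a.elim0) Fin.elim0
  simpa [auxDM] using this

lemma entries_auxDM (n ℓ : ℕ) (v : Fin ℓ → Fin n → ℤ) (b : Fin n → ℤ)
    (hv : ∀ i j, |v i j| ≤ 1) (hb : ∀ j, |b j| ≤ 1) (m : ℕ)
    (e : Fin m → Fin n) (g : Fin m → Fin ℓ ⊕ Unit) (i j : Fin m) :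
    |auxDM n ℓ v b m e g i j| ≤ 1 := by
  rcases hg : g j with i' | u
  · simpa [auxDM, hg] using hv i' (e i)
  · simpa [auxDM, hg] using hb (e i)

lemma auxD_sq_le (n ℓ : ℕ) (v : Fin ℓ → Fin n → ℤ) (b : Fin n → ℤ) (hn : 1 ≤ n)
    (hv : ∀ i j, |v i j| ≤ 1) (hb : ∀ j, |b j| ≤ 1) :
    (auxD n ℓ v b) ^ 2 ≤ n ^ n := by
  have hne : Nonempty (Σ m : Fin (n+1), (Fin (m:ℕ) ↪ Fin n) × ((Fin (m:ℕ)) → Fin ℓ ⊕ Unit)) :=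
    ⟨⟨⟨0, by omega⟩, ⟨Fin.elim0, fun a => a.elim0⟩, Fin.elim0⟩⟩
  obtain ⟨p, _, hp⟩ := Finset.exists_mem_eq_sup Finset.univ Finset.univ_nonempty
    (fun p : (Σ m : Fin (n+1), (Fin (m:ℕ) ↪ Fin n) × ((Fin (m:ℕ)) → Fin ℓ ⊕ Unit)) =>
      (auxDM n ℓ v b (p.1:ℕ) p.2.1 p.2.2).det.natAbs)
  rw [auxD, hp]
  set m : ℕ := (p.1 : ℕ) with hm
  have hmn : m ≤ n := by omega
  have hsq := aux_hadamard_sq m (auxDM n ℓ v b m p.2.1 p.2.2)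
    (entries_auxDM n ℓ v b hv hb m p.2.1 p.2.2)
  have hstep : ((m:ℤ))^m ≤ (n:ℤ)^n :=
    le_trans (pow_le_pow_left₀ (by positivity) (by exact_mod_cast hmn) m)
      (pow_le_pow_right₀ (by exact_mod_cast hn) hmn)
  have : (((auxDM n ℓ v b m p.2.1 p.2.2).det.natAbs ^ 2 : ℕ) : ℤ) ≤ ((n^n : ℕ) : ℤ) := by
    push_cast
    rw [sq_abs]
    exact le_trans hsq hstep
  exact_mod_cast this

open Matrix in
lemma aux_col_det_bound (k : ℕ) : ∀ (m : ℕ) (M : Matrix (Fin (m+1)) (Fin (m+1)) ℤ),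
    (∀ i j, |M i j| ≤ 1) → (∀ j, j ≠ Fin.last m → ∑ i, |M i j| ≤ (k:ℤ)) →
    |M.det| ≤ (k:ℤ) ^ m := by
  intro m
  induction m with
  | zero =>
    intro M h1 _
    rw [Matrix.det_fin_one]
    simpa using h1 0 0
  | succ m ih =>
    intro M h1 h2
    rw [Matrix.det_succ_column_zero]
    have hterm : ∀ i : Fin (m+2),
        |(-1:ℤ) ^ (i:ℕ) * M i 0 * (M.submatrix i.succAbove Fin.succ).det|
          ≤ |M i 0| * (k:ℤ)^m := by
      intro i
      have hsub : |(M.submatrix i.succAbove Fin.succ).det| ≤ (k:ℤ)^m := by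
        apply ih
        · intro a b; exact h1 _ _
        · intro j hj
          have hjs : Fin.succ j ≠ Fin.last (m+1) := by
            intro hc
            apply hj
            have : Fin.succ j = Fin.succ (Fin.last m) := by rw [hc, Fin.succ_last]
            exact Fin.succ_injective _ this
          have hfull := h2 (Fin.succ j) hjs
          have hsplit := Fin.sum_univ_succAbove (fun r => |M r (Fin.succ j)|) i
          have : ∑ i_1 : Fin (m+1), |M (i.succAbove i_1) (Fin.succ j)| ≤ (k:ℤ) := by
            rw [hsplit] at hfull
            have := abs_nonneg (M i (Fin.succ j))
            omega
          simpa [Matrix.submatrix_apply] using this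
      rw [abs_mul, abs_mul, abs_pow, abs_neg, abs_one, one_pow, one_mul]
      exact mul_le_mul_of_nonneg_left hsub (abs_nonneg _)
    calc |∑ i : Fin (m+2), (-1:ℤ)^(i:ℕ) * M i 0 * (M.submatrix i.succAbove Fin.succ).det|
        ≤ ∑ i : Fin (m+2), |(-1:ℤ)^(i:ℕ) * M i 0 * (M.submatrix i.succAbove Fin.succ).det| :=
          Finset.abs_sum_le_sum_abs _ _
      _ ≤ ∑ i : Fin (m+2), |M i 0| * (k:ℤ)^m := Finset.sum_le_sum fun i _ => hterm i
      _ = (∑ i : Fin (m+2), |M i 0|) * (k:ℤ)^m := by rw [Finset.sum_mul]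
      _ ≤ (k:ℤ) * (k:ℤ)^m := by
          apply mul_le_mul_of_nonneg_right _ (by positivity)
          exact h2 0 (by simp [Fin.ext_iff])
      _ = (k:ℤ)^(m+1) := by ring


lemma auxD_le_k (n ℓ k : ℕ) (v : Fin ℓ → Fin n → ℤ) (b : Fin n → ℤ) (hk : 1 ≤ k)
    (hv : ∀ i j, |v i j| ≤ 1) (hb : ∀ j, |b j| ≤ 1)
    (hcol : ∀ i, ∑ j, |v i j| ≤ (k:ℤ)) :
    auxD n ℓ v b ≤ k ^ (n-1) := by
  apply Finset.sup_le
  rintro ⟨⟨m, hm1⟩, e, g⟩ -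
  simp only
  by_cases hcoll : ∃ a a' : Fin m, a ≠ a' ∧ g a = g a'
  · obtain ⟨a, a', hne, heq⟩ := hcoll
    have hdet0 : (auxDM n ℓ v b m e g).det = 0 :=
      det_zero_of_column_eq hne (fun t => by simp [auxDM, heq])
    simp [hdet0]
  push_neg at hcoll
  have hginj : Function.Injective g := by
    intro a a' h
    by_contra hne
    exact hcoll a a' hne h
  by_cases hm0 : m = 0
  · subst hm0
    simp only [Matrix.det_fin_zero, Int.natAbs_one]
    exact Nat.one_le_pow _ _ hk
  obtain ⟨m', rfl⟩ := Nat.exists_eq_succ_of_ne_zero hm0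
  have hmn : m' + 1 ≤ n := by
    have := Fintype.card_le_of_embedding e
    simpa using this
  have key : ∀ (g' : Fin (m'+1) → Fin ℓ ⊕ Unit),
      (∀ a, a ≠ Fin.last m' → ∃ i, g' a = Sum.inl i) →
      |(auxDM n ℓ v b (m'+1) e g').det| ≤ (k:ℤ)^m' := by
    intro g' hg'
    apply aux_col_det_bound k m'
    · exact entries_auxDM n ℓ v b hv hb (m'+1) e g'
    · intro j hj
      obtain ⟨i, hi⟩ := hg' j hj
      have hcolsum : ∑ t : Fin (m'+1), |v i (e t)| ≤ (k:ℤ) := by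
        have h1 : ∑ j ∈ Finset.univ.image e, |v i j| = ∑ t : Fin (m'+1), |v i (e t)| :=
          Finset.sum_image (fun a _ c _ h => e.injective h)
        rw [← h1]
        calc ∑ j ∈ Finset.univ.image e, |v i j|
            ≤ ∑ j : Fin n, |v i j| := Finset.sum_le_sum_of_subset_of_nonneg
              (Finset.subset_univ _) (fun j _ _ => abs_nonneg _)
          _ ≤ (k:ℤ) := hcol i
      calc ∑ t, |auxDM n ℓ v b (m'+1) e g' t j|
          = ∑ t : Fin (m'+1), |v i (e t)| := by
            refine Finset.sum_congr rfl fun t _ => ?_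
            simp [auxDM, hi]
        _ ≤ (k:ℤ) := hcolsum
  have hmain : |(auxDM n ℓ v b (m'+1) e g).det| ≤ (k:ℤ)^m' := by
    by_cases hex : ∃ a₀, g a₀ = Sum.inr ()
    · obtain ⟨a₀, ha₀⟩ := hex
      set σ : Equiv.Perm (Fin (m'+1)) := Equiv.swap a₀ (Fin.last m') with hσ
      have hMM : (auxDM n ℓ v b (m'+1) e (g ∘ σ))
          = (auxDM n ℓ v b (m'+1) e g).submatrix id σ := by
        ext t a; simp [auxDM, Matrix.submatrix_apply]
      have hdet : |(auxDM n ℓ v b (m'+1) e (g ∘ σ)).det|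
          = |(auxDM n ℓ v b (m'+1) e g).det| := by
        rw [hMM, Matrix.det_permute']
        rcases Int.units_eq_one_or (Equiv.Perm.sign σ) with h | h <;> simp [h]
      rw [← hdet]
      apply key
      intro a ha
      rcases hval : (g ∘ σ) a with i | u
      · exact ⟨i, rfl⟩
      · exfalso
        have h1 : g (σ a) = g a₀ := by
          rw [ha₀]
          have : u = () := rfl
          simpa [this] using hval
        have h2 : σ a = a₀ := hginj h1
        have h5 : σ (σ a) = a := Equiv.swap_apply_self _ _ _
        rw [h2] at h5
        have h6 : σ a₀ = Fin.last m' := Equiv.swap_apply_left _ _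
        apply ha
        rw [← h5]
        exact h6
    · push_neg at hex
      apply key
      intro a _
      rcases hval : g a with i | u
      · exact ⟨i, rfl⟩
      · exact absurd (by rw [hval]) (hex a)
  have : ((auxDM n ℓ v b (m'+1) e g).det.natAbs : ℤ) ≤ ((k^m' : ℕ) : ℤ) := by
    rw [← Int.abs_eq_natAbs]
    push_cast
    exact hmain
  have h4 : (auxDM n ℓ v b (m'+1) e g).det.natAbs ≤ k^m' := by exact_mod_cast this
  calc (auxDM n ℓ v b (m'+1) e g).det.natAbs ≤ k^m' := h4
    _ ≤ k^(n-1) := Nat.pow_le_pow_right hk (by omega)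


lemma aux_digits_zero : ∀ (L : ℕ) (z : Fin L → ℤ) (B : ℤ), 0 ≤ B →
    (∀ i, |z i| ≤ B) → (∑ i, z i * (B+1) ^ (i:ℕ)) = 0 → ∀ i, z i = 0 := by
  intro L
  induction L with
  | zero => intro z B _ _ _ i; exact i.elim0
  | succ L ih =>
    intro z B hB hz hsum
    have hsplit : ∑ i : Fin (L+1), z i * (B+1)^(i:ℕ)
        = z 0 + (B+1) * ∑ i : Fin L, z i.succ * (B+1)^(i:ℕ) := by
      rw [Fin.sum_univ_succ]
      simp only [Fin.val_zero, pow_zero, mul_one, Fin.val_succ]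
      rw [Finset.mul_sum]
      congr 1
      exact Finset.sum_congr rfl fun i _ => by ring
    have hdvd : (B+1) ∣ z 0 := by
      have : z 0 = -((B+1) * ∑ i : Fin L, z i.succ * (B+1)^(i:ℕ)) := by
        rw [hsplit] at hsum; linarith
      rw [this]
      exact dvd_neg.mpr (Dvd.intro _ rfl)
    have hz0 : z 0 = 0 := by
      refine Int.eq_zero_of_abs_lt_dvd hdvd ?_
      have := hz 0
      omega
    have hrest : ∑ i : Fin L, z i.succ * (B+1)^(i:ℕ) = 0 := by
      rw [hsplit, hz0] at hsum
      have hB1 : B + 1 ≠ 0 := by omega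
      have := mul_eq_zero.mp (by linarith : (B+1) * ∑ i : Fin L, z i.succ * (B+1)^(i:ℕ) = 0)
      tauto
    have hind := ih (fun i => z i.succ) B hB (fun i => hz _) hrest
    intro i
    refine Fin.cases hz0 (fun j => hind j) i

open Matrix in
lemma aux_master (n ℓ : ℕ) (v : Fin ℓ → Fin n → ℤ) (bb : Fin n → ℤ) (D : ℕ)
    (hD : ∀ (m : ℕ), m ≤ n → ∀ (e : Fin m → Fin n), Function.Injective e →
      ∀ (g : Fin m → Fin ℓ ⊕ Unit),
      ((Matrix.of fun t a => Sum.elim v (fun _ => bb) (g a) (e t) :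
        Matrix (Fin m) (Fin m) ℤ)).det.natAbs ≤ D) :
    ∀ (s : ℕ) (c : Fin s → Fin ℓ), Function.Injective c →
    (∃ z : Fin ℓ → ℤ, z ≠ 0 ∧ (∀ i, (∀ a, c a ≠ i) → z i = 0) ∧
        (∑ i, z i • v i = 0) ∧ (∀ i, (z i).natAbs ≤ D))
    ∨ (∃ e : Fin s ↪ Fin n,
        (Matrix.of (fun t a => v (c a) (e t)) : Matrix (Fin s) (Fin s) ℤ).det ≠ 0) := by
  intro s
  induction s with
  | zero =>
    intro c hc
    right
    exact ⟨⟨Fin.elim0, fun a => a.elim0⟩, by simp [Matrix.det_fin_zero]⟩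
  | succ s ih =>
    intro c hc
    rcases ih (c ∘ Fin.castSucc) (hc.comp (Fin.castSucc_injective s)) with h | ⟨e, hdet⟩
    · left
      obtain ⟨z, hz0, hsupp, hrel, hbd⟩ := h
      exact ⟨z, hz0, fun i hi => hsupp i (fun a => hi a.castSucc), hrel, hbd⟩
    · have hsn : s ≤ n := by simpa using Fintype.card_le_of_embedding e
      set N : Matrix (Fin s) (Fin s) ℤ := Matrix.of (fun t a => v (c a.castSucc) (e t)) with hN
      have hNdet : N.det ≠ 0 := hdet
      set w : Fin n → ℤ := v (c (Fin.last s)) with hw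
      set γ : Fin s → ℤ := N.cramer (fun t => w (e t)) with hγ
      set coeff : Fin (s+1) → ℤ := Fin.snoc (fun a => -γ a) N.det with hcoeff
      set u : Fin n → ℤ := fun r => N.det * w r - ∑ a, γ a * v (c a.castSucc) r with hu
      -- u vanishes on the rows of e
      have hue : ∀ t, u (e t) = 0 := by
        intro t
        have hmv := congrFun (Matrix.mulVec_cramer N (fun t => w (e t))) t
        rw [← hγ] at hmv
        simp only [Matrix.mulVec, dotProduct, Pi.smul_apply, smul_eq_mul] at hmv
        simp only [hu]
        have h2 : ∑ a, γ a * v (c a.castSucc) (e t) = ∑ a, N t a * γ a := by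
          refine Finset.sum_congr rfl fun a _ => ?_
          rw [hN]
          simp [Matrix.of_apply, mul_comm]
        rw [h2, hmv]
        ring
      -- bounds on the coefficients
      have hbd : ∀ a : Fin (s+1), (coeff a).natAbs ≤ D := by
        intro a
        refine Fin.lastCases ?_ (fun a' => ?_) a
        · rw [hcoeff]
          simp only [Fin.snoc_last]
          have hNeq : N = Matrix.of fun t a =>
              Sum.elim v (fun _ => bb) ((fun a : Fin s => (Sum.inl (c a.castSucc) : Fin ℓ ⊕ Unit)) a) (e t) := by
            ext t a'; simp [hN]
          rw [hNeq]
          exact hD s hsn e e.injective _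
        · rw [hcoeff]
          simp only [Fin.snoc_castSucc]
          rw [Int.natAbs_neg]
          have hcr : γ a' = (N.updateCol a' (fun t => w (e t))).det := by
            rw [hγ]; exact Matrix.cramer_apply _ _ _
          have hupd : N.updateCol a' (fun t => w (e t)) =
              Matrix.of fun t a =>
                Sum.elim v (fun _ => bb) ((Function.update (fun a : Fin s => (Sum.inl (c a.castSucc) : Fin ℓ ⊕ Unit)) a'
                  (Sum.inl (c (Fin.last s)))) a) (e t) := by
            ext t a''
            rw [Matrix.updateCol_apply]
            by_cases h : a'' = a'
            · simp [h, Function.update_self, hw]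
            · simp [hN, h, Function.update_of_ne h]
          rw [hcr, hupd]
          exact hD s hsn e e.injective _
      by_cases hu0 : u = 0
      · left
        refine ⟨fun i => ∑ a : Fin (s+1), if c a = i then coeff a else 0, ?_, ?_, ?_, ?_⟩
        · intro hzero
          have h1 := congrFun hzero (c (Fin.last s))
          simp only [Pi.zero_apply] at h1
          have heq : (∑ a : Fin (s+1), if c a = c (Fin.last s) then coeff a else 0)
              = coeff (Fin.last s) := by
            rw [Finset.sum_eq_single_of_mem (Fin.last s) (Finset.mem_univ _)
              (fun a _ ha => if_neg (fun hc' => ha (hc hc')))]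
            exact if_pos rfl
          rw [heq] at h1
          rw [hcoeff] at h1
          simp only [Fin.snoc_last] at h1
          exact hNdet h1
        · intro i hi
          exact Finset.sum_eq_zero fun a _ => if_neg (hi a)
        · funext r
          rw [Finset.sum_apply]
          have hswap : ∑ i, ((∑ a : Fin (s+1), if c a = i then coeff a else 0) • v i) r
              = ∑ a : Fin (s+1), coeff a * v (c a) r := by
            simp only [Pi.smul_apply, smul_eq_mul, Finset.sum_mul]
            rw [Finset.sum_comm]
            refine Finset.sum_congr rfl fun a _ => ?_
            rw [Finset.sum_eq_single_of_mem (c a) (Finset.mem_univ _)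
              (fun i _ hne => by rw [if_neg (fun h => hne h.symm), zero_mul])]
            rw [if_pos rfl]
          rw [hswap]
          have hsplit : ∑ a : Fin (s+1), coeff a * v (c a) r
              = (∑ a : Fin s, -γ a * v (c a.castSucc) r) + N.det * w r := by
            rw [Fin.sum_univ_castSucc]
            congr 1
            · refine Finset.sum_congr rfl fun a _ => ?_
              rw [hcoeff]; simp only [Fin.snoc_castSucc]
            · rw [hcoeff, hw]; simp only [Fin.snoc_last]
          rw [hsplit]
          have := congrFun hu0 r
          simp only [hu, Pi.zero_apply] at this
          simp only [neg_mul, Finset.sum_neg_distrib]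
          rw [Pi.zero_apply]
          linarith [this]
        · intro i
          show (∑ a : Fin (s+1), if c a = i then coeff a else 0).natAbs ≤ D
          by_cases h : ∃ a, c a = i
          · obtain ⟨a₀, ha₀⟩ := h
            have heq : (∑ a : Fin (s+1), if c a = i then coeff a else 0) = coeff a₀ := by
              rw [Finset.sum_eq_single_of_mem a₀ (Finset.mem_univ _)
                (fun a _ hne => if_neg (fun hc' => hne (hc (by rw [hc', ha₀]))))]
              exact if_pos ha₀
            rw [heq]
            exact hbd a₀
          · push_neg at h
            rw [Finset.sum_eq_zero fun a _ => if_neg (h a)]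
            simp
      · right
        obtain ⟨r, hur⟩ := Function.ne_iff.mp hu0
        rw [Pi.zero_apply] at hur
        have hre : ∀ t, e t ≠ r := fun t ht => hur (ht ▸ hue t)
        set e' : Fin (s+1) → Fin n := Fin.snoc e r with he'
        have he'inj : Function.Injective e' := by
          intro a a' h
          induction a using Fin.lastCases with
          | last =>
            induction a' using Fin.lastCases with
            | last => rfl
            | cast a₁ =>
              rw [he'] at h; simp only [Fin.snoc_last, Fin.snoc_castSucc] at h
              exact absurd h.symm (hre a₁)
          | cast a₀ =>
            induction a' using Fin.lastCases with
            | last =>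
              rw [he'] at h; simp only [Fin.snoc_last, Fin.snoc_castSucc] at h
              exact absurd h (hre a₀)
            | cast a₁ =>
              rw [he'] at h; simp only [Fin.snoc_castSucc] at h
              rw [e.injective h]
        set N' : Matrix (Fin (s+1)) (Fin (s+1)) ℤ := Matrix.of (fun t a => v (c a) (e' t))
          with hN'
        have hBcol : (fun t => u (e' t)) = (fun t => ∑ a2 : Fin (s+1), coeff a2 • N' t a2) := by
          funext t
          rw [Fin.sum_univ_castSucc]
          simp only [hcoeff, Fin.snoc_castSucc, Fin.snoc_last, smul_eq_mul, hN',
            Matrix.of_apply, hu, neg_mul, Finset.sum_neg_distrib]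
          have hcl : v (c (Fin.last s)) (e' t) = w (e' t) := by rw [hw]
          rw [hcl]
          ring
        have hfact1 : (N'.updateCol (Fin.last s) (fun t => u (e' t))).det
            = N.det * N'.det := by
          rw [hBcol, Matrix.det_updateCol_sum]
          rw [hcoeff]; simp only [Fin.snoc_last, smul_eq_mul]
        have hfact2 : (N'.updateCol (Fin.last s) (fun t => u (e' t))).det
            = u r * N.det := by
          rw [Matrix.det_succ_column _ (Fin.last s)]
          rw [Finset.sum_eq_single_of_mem (Fin.last s) (Finset.mem_univ _) ?side]
          case side =>
            intro t _ htne
            obtain ⟨t', rfl⟩ := Fin.exists_castSucc_eq.mpr htne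
            have h4 : (N'.updateCol (Fin.last s) (fun t => u (e' t)))
                t'.castSucc (Fin.last s) = 0 := by
              rw [Matrix.updateCol_self, he']
              simp only [Fin.snoc_castSucc]
              exact hue t'
            rw [h4]; ring
          · have h1 : (N'.updateCol (Fin.last s) (fun t => u (e' t)))
                (Fin.last s) (Fin.last s) = u r := by
              rw [Matrix.updateCol_self, he']
              simp only [Fin.snoc_last]
            have h2 : ((N'.updateCol (Fin.last s) (fun t => u (e' t))).submatrix
                (Fin.last s).succAbove (Fin.last s).succAbove) = N := by
              ext t a
              rw [Matrix.submatrix_apply, Fin.succAbove_last,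
                Matrix.updateCol_ne (Fin.castSucc_lt_last a).ne]
              rw [hN', hN]
              simp only [Matrix.of_apply, he', Fin.snoc_castSucc]
            rw [h1, h2]
            have h3 : (-1 : ℤ) ^ ((Fin.last s : ℕ) + (Fin.last s : ℕ)) = 1 :=
              Even.neg_one_pow ⟨s, rfl⟩
            rw [h3]; ring
        have hN'det : N'.det = u r := by
          have h5 : N.det * N'.det = u r * N.det := hfact1.symm.trans hfact2
          have h6 : N'.det * N.det = u r * N.det := by rw [mul_comm N'.det N.det]; exact h5
          exact mul_right_cancel₀ hNdet h6
        refine ⟨⟨e', he'inj⟩, ?_⟩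
        have : (Matrix.of (fun t a => v (c a) ((⟨e', he'inj⟩ : Fin (s+1) ↪ Fin n) t))
            : Matrix (Fin (s+1)) (Fin (s+1)) ℤ) = N' := rfl
        rw [this, hN'det]
        exact hur



/-- Let `n ≥ 1`, let `v₁, …, v_ℓ ∈ {0,1,−1}^n` be pairwise distinct non-zero vectors, let
`b ∈ {0,1,−1}^n`, and let `k` be the maximum number of non-zero entries in any of the `vᵢ`.
If `∑ xᵢ vᵢ = b` has a non-negative integer solution, then it has one with
`∑ xᵢ ≤ 2·ℓ·n·min {nⁿ, k^(2n−2)}`. -/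
theorem stmt2 (n ℓ : ℕ) (hn : 1 ≤ n)
    (v : Fin ℓ → Fin n → ℤ) (b : Fin n → ℤ)
    (hv : ∀ i j, v i j = 0 ∨ v i j = 1 ∨ v i j = -1)
    (hb : ∀ j, b j = 0 ∨ b j = 1 ∨ b j = -1)
    (hdist : Function.Injective v)
    (hnz : ∀ i, v i ≠ 0)
    (k : ℕ)
    (hk : k = Finset.univ.sup fun i : Fin ℓ =>
      (Finset.univ.filter fun j : Fin n => v i j ≠ 0).card)
    (hsol : ∃ x : Fin ℓ → ℕ, ∑ i, (x i : ℤ) • v i = b) :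
    ∃ x : Fin ℓ → ℕ, (∑ i, (x i : ℤ) • v i = b) ∧
      ∑ i, x i ≤ 2 * ℓ * n * min (n ^ n) (k ^ (2 * n - 2)) := by
  classical
  rcases Nat.eq_zero_or_pos ℓ with hl0 | hl
  · obtain ⟨x, hx⟩ := hsol
    subst hl0
    exact ⟨x, hx, by simp⟩
  have hk1 : 1 ≤ k := by
    obtain ⟨j, hj⟩ : ∃ j, v ⟨0, hl⟩ j ≠ 0 := by
      by_contra h
      push_neg at h
      exact hnz ⟨0, hl⟩ (funext h)
    have hcard : 1 ≤ (Finset.univ.filter fun j => v ⟨0, hl⟩ j ≠ 0).card :=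
      Finset.card_pos.mpr ⟨j, Finset.mem_filter.mpr ⟨Finset.mem_univ _, hj⟩⟩
    rw [hk]
    exact le_trans hcard (Finset.le_sup (f := fun i : Fin ℓ => (Finset.univ.filter fun j : Fin n => v i j ≠ 0).card) (Finset.mem_univ (⟨0, hl⟩ : Fin ℓ)))
  have hva : ∀ i j, |v i j| ≤ 1 := fun i j => by rcases hv i j with h | h | h <;> simp [h]
  have hba : ∀ j, |b j| ≤ 1 := fun j => by rcases hb j with h | h | h <;> simp [h]
  have hcolsum : ∀ i, ∑ j, |v i j| ≤ (k : ℤ) := by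
    intro i
    have h1 : ∑ j, |v i j| = ((Finset.univ.filter fun j => v i j ≠ 0).card : ℤ) := by
      rw [Finset.card_filter]
      push_cast
      refine Finset.sum_congr rfl fun j _ => ?_
      rcases hv i j with h | h | h <;> simp [h]
    rw [h1]
    have h2 : (Finset.univ.filter fun j => v i j ≠ 0).card ≤ k := by
      rw [hk]; exact Finset.le_sup (f := fun i : Fin ℓ => (Finset.univ.filter fun j : Fin n => v i j ≠ 0).card) (Finset.mem_univ i)
    exact_mod_cast h2
  set D := auxD n ℓ v b with hDdef
  have hD1 : 1 ≤ D := one_le_auxD n ℓ v b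
  have hDsq : D ^ 2 ≤ min (n ^ n) (k ^ (2 * n - 2)) := by
    refine le_min (auxD_sq_le n ℓ v b hn hva hba) ?_
    have h1 : D ≤ k ^ (n - 1) := auxD_le_k n ℓ k v b hk1 hva hba hcolsum
    calc D ^ 2 ≤ (k ^ (n - 1)) ^ 2 := Nat.pow_le_pow_left h1 2
      _ = k ^ (2 * n - 2) := by rw [← pow_mul]; congr 1; omega
  -- minimal total
  have hex : ∃ N, ∃ x : Fin ℓ → ℕ, (∑ i, (x i : ℤ) • v i = b) ∧ ∑ i, x i = N := by
    obtain ⟨x, hx⟩ := hsol; exact ⟨∑ i, x i, x, hx, rfl⟩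
  set N₀ := Nat.find hex with hN₀
  obtain ⟨x₁, hx₁, hx₁N⟩ := Nat.find_spec hex
  have hmin : ∀ y : Fin ℓ → ℕ, (∑ i, (y i : ℤ) • v i = b) → N₀ ≤ ∑ i, y i :=
    fun y hy => Nat.find_le ⟨y, hy, rfl⟩
  have hex2 : ∃ M, ∃ x : Fin ℓ → ℕ, (∑ i, (x i : ℤ) • v i = b) ∧ (∑ i, x i = N₀) ∧
      (∑ i, x i * (N₀ + 1) ^ (i : ℕ) = M) := ⟨_, x₁, hx₁, hx₁N, rfl⟩
  obtain ⟨x, hxsol, hxN, hxM⟩ := Nat.find_spec hex2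
  have hminPhi : ∀ y : Fin ℓ → ℕ, (∑ i, (y i : ℤ) • v i = b) → (∑ i, y i = N₀) →
      Nat.find hex2 ≤ ∑ i, y i * (N₀ + 1) ^ (i : ℕ) :=
    fun y h1 h2 => Nat.find_le ⟨y, h1, h2, rfl⟩
  have hxle : ∀ i, x i ≤ N₀ := by
    intro i
    rw [← hxN]
    exact Finset.single_le_sum (fun i _ => Nat.zero_le _) (Finset.mem_univ i)
  -- the contradiction machine
  have hcontra : ∀ z : Fin ℓ → ℤ, (∑ i, z i • v i = 0) → (∀ i, (z i).natAbs ≤ x i) →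
      z = 0 := by
    intro z hz hzb
    have habs : ∀ i, |z i| ≤ (x i : ℤ) := by
      intro i
      rw [Int.abs_eq_natAbs]
      exact_mod_cast hzb i
    have hplus : ∀ i, (((( x i : ℤ) + z i).toNat : ℤ)) = (x i : ℤ) + z i := fun i =>
      Int.toNat_of_nonneg (by linarith [(abs_le.mp (habs i)).1])
    have hminus : ∀ i, ((((x i : ℤ) - z i).toNat : ℤ)) = (x i : ℤ) - z i := fun i =>
      Int.toNat_of_nonneg (by linarith [(abs_le.mp (habs i)).2])
    have hsolp : ∑ i, (((((x i : ℤ) + z i).toNat : ℕ) : ℤ)) • v i = b := by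
      have h1 : ∑ i, ((x i : ℤ) + z i) • v i = b := by
        have h2 : ∑ i, ((x i : ℤ) + z i) • v i
            = ∑ i, (x i : ℤ) • v i + ∑ i, z i • v i := by
          rw [← Finset.sum_add_distrib]
          exact Finset.sum_congr rfl fun i _ => add_smul _ _ _
        rw [h2, hxsol, hz, add_zero]
      rw [← h1]
      exact Finset.sum_congr rfl fun i _ => by rw [hplus i]
    have hsolm : ∑ i, (((((x i : ℤ) - z i).toNat : ℕ) : ℤ)) • v i = b := by
      have h1 : ∑ i, ((x i : ℤ) - z i) • v i = b := by
        have h2 : ∑ i, ((x i : ℤ) - z i) • v i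
            = ∑ i, (x i : ℤ) • v i - ∑ i, z i • v i := by
          rw [← Finset.sum_sub_distrib]
          exact Finset.sum_congr rfl fun i _ => sub_smul _ _ _
        rw [h2, hxsol, hz, sub_zero]
      rw [← h1]
      exact Finset.sum_congr rfl fun i _ => by rw [hminus i]
    set Z : ℤ := ∑ i, z i with hZ
    have htotp : ((∑ i, ((x i : ℤ) + z i).toNat : ℕ) : ℤ) = (N₀ : ℤ) + Z := by
      push_cast
      rw [Finset.sum_congr rfl fun i _ => hplus i, Finset.sum_add_distrib]
      have : ((N₀ : ℤ)) = ∑ i, ((x i : ℕ) : ℤ) := by rw [← hxN]; push_cast; rfl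
      rw [hZ, ← this]
    have htotm : ((∑ i, ((x i : ℤ) - z i).toNat : ℕ) : ℤ) = (N₀ : ℤ) - Z := by
      push_cast
      rw [Finset.sum_congr rfl fun i _ => hminus i, Finset.sum_sub_distrib]
      have : ((N₀ : ℤ)) = ∑ i, ((x i : ℕ) : ℤ) := by rw [← hxN]; push_cast; rfl
      rw [hZ, ← this]
    have hge1 := hmin _ hsolp
    have hge2 := hmin _ hsolm
    have hge1' : (N₀ : ℤ) ≤ (N₀ : ℤ) + Z := by
      calc (N₀ : ℤ) ≤ ((∑ i, ((x i : ℤ) + z i).toNat : ℕ) : ℤ) := by exact_mod_cast hge1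
        _ = (N₀ : ℤ) + Z := htotp
    have hge2' : (N₀ : ℤ) ≤ (N₀ : ℤ) - Z := by
      calc (N₀ : ℤ) ≤ ((∑ i, ((x i : ℤ) - z i).toNat : ℕ) : ℤ) := by exact_mod_cast hge2
        _ = (N₀ : ℤ) - Z := htotm
    have hZ0 : Z = 0 := by linarith
    have htotp' : (∑ i, ((x i : ℤ) + z i).toNat : ℕ) = N₀ := by
      have := htotp; rw [hZ0, add_zero] at this; exact_mod_cast this
    have htotm' : (∑ i, ((x i : ℤ) - z i).toNat : ℕ) = N₀ := by
      have := htotm; rw [hZ0, sub_zero] at this; exact_mod_cast this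
    set psi : ℤ := ∑ i, z i * ((N₀ : ℤ) + 1) ^ (i : ℕ) with hpsi
    have hPhip : ((∑ i, ((x i : ℤ) + z i).toNat * (N₀ + 1) ^ (i : ℕ) : ℕ) : ℤ)
        = (Nat.find hex2 : ℤ) + psi := by
      push_cast
      have h3 : ∀ i : Fin ℓ, ((((x i : ℤ) + z i).toNat : ℤ)) * ((N₀ : ℤ) + 1) ^ (i : ℕ)
          = (x i : ℤ) * ((N₀ : ℤ) + 1) ^ (i : ℕ) + z i * ((N₀ : ℤ) + 1) ^ (i : ℕ) := by
        intro i; rw [hplus i]; ring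
      rw [Finset.sum_congr rfl fun i _ => h3 i, Finset.sum_add_distrib]
      have h4 : ((Nat.find hex2 : ℕ) : ℤ) = ∑ i, (x i : ℤ) * ((N₀ : ℤ) + 1) ^ (i : ℕ) := by
        rw [← hxM]; push_cast; rfl
      rw [h4, hpsi]
    have hPhim : ((∑ i, ((x i : ℤ) - z i).toNat * (N₀ + 1) ^ (i : ℕ) : ℕ) : ℤ)
        = (Nat.find hex2 : ℤ) - psi := by
      push_cast
      have h3 : ∀ i : Fin ℓ, ((((x i : ℤ) - z i).toNat : ℤ)) * ((N₀ : ℤ) + 1) ^ (i : ℕ)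
          = (x i : ℤ) * ((N₀ : ℤ) + 1) ^ (i : ℕ) - z i * ((N₀ : ℤ) + 1) ^ (i : ℕ) := by
        intro i; rw [hminus i]; ring
      rw [Finset.sum_congr rfl fun i _ => h3 i, Finset.sum_sub_distrib]
      have h4 : ((Nat.find hex2 : ℕ) : ℤ) = ∑ i, (x i : ℤ) * ((N₀ : ℤ) + 1) ^ (i : ℕ) := by
        rw [← hxM]; push_cast; rfl
      rw [h4, hpsi]
    have hp1 := hminPhi _ hsolp htotp'
    have hp2 := hminPhi _ hsolm htotm'
    have hp1' : (Nat.find hex2 : ℤ) ≤ (Nat.find hex2 : ℤ) + psi := by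
      calc (Nat.find hex2 : ℤ)
          ≤ ((∑ i, ((x i : ℤ) + z i).toNat * (N₀ + 1) ^ (i : ℕ) : ℕ) : ℤ) := by
            exact_mod_cast hp1
        _ = (Nat.find hex2 : ℤ) + psi := hPhip
    have hp2' : (Nat.find hex2 : ℤ) ≤ (Nat.find hex2 : ℤ) - psi := by
      calc (Nat.find hex2 : ℤ)
          ≤ ((∑ i, ((x i : ℤ) - z i).toNat * (N₀ + 1) ^ (i : ℕ) : ℕ) : ℤ) := by
            exact_mod_cast hp2
        _ = (Nat.find hex2 : ℤ) - psi := hPhim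
    have hpsi0 : psi = 0 := by linarith
    have hzero := aux_digits_zero ℓ z (N₀ : ℤ) (by positivity) (fun i => by
      calc |z i| ≤ (x i : ℤ) := habs i
        _ ≤ (N₀ : ℤ) := by exact_mod_cast hxle i) (by rw [← hpsi]; exact hpsi0)
    funext i
    exact hzero i
  -- large-coordinate set
  set L := Finset.univ.filter (fun i => D ≤ x i) with hLdef
  set s := L.card with hs
  set c : Fin s → Fin ℓ := fun a => L.orderEmbOfFin rfl a with hcdef
  have hcinj : Function.Injective c := (L.orderEmbOfFin rfl).injective
  have hcmem : ∀ a, c a ∈ L := fun a => Finset.orderEmbOfFin_mem L rfl a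
  have hcrange : ∀ i ∈ L, ∃ a, c a = i := by
    intro i hi
    have h1 : i ∈ Set.range (L.orderEmbOfFin rfl) := by
      rw [Finset.range_orderEmbOfFin]
      exact_mod_cast hi
    obtain ⟨a, ha⟩ := h1
    exact ⟨a, ha⟩
  have hDbound : ∀ (m : ℕ), m ≤ n → ∀ (e : Fin m → Fin n), Function.Injective e →
      ∀ (g : Fin m → Fin ℓ ⊕ Unit),
      ((Matrix.of fun t a => Sum.elim v (fun _ => b) (g a) (e t) :
        Matrix (Fin m) (Fin m) ℤ)).det.natAbs ≤ D :=
    fun m hm e he g => le_auxD n ℓ v b m hm e he g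
  rcases aux_master n ℓ v b D hDbound s c hcinj with ⟨z, hz0, hzsupp, hzrel, hzbd⟩ |
    ⟨e, hdet⟩
  · exfalso
    apply hz0
    apply hcontra z hzrel
    intro i
    by_cases hiL : i ∈ L
    · have h1 : D ≤ x i := (Finset.mem_filter.mp hiL).2
      exact le_trans (hzbd i) h1
    · have h1 : z i = 0 := hzsupp i (fun a ha => hiL (ha ▸ hcmem a))
      simp [h1]
  -- Cramer bound on the large coordinates
  · have hsn : s ≤ n := by simpa using Fintype.card_le_of_embedding e
    set N : Matrix (Fin s) (Fin s) ℤ := Matrix.of (fun t a => v (c a) (e t)) with hNdef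
    have hNdet : N.det ≠ 0 := hdet
    set notL := Finset.univ.filter (fun i => ¬ D ≤ x i) with hnotLdef
    set sigma : ℕ := ∑ i ∈ notL, x i with hsigma
    have hkey : ∀ j : Fin s, (x (c j) : ℤ) ≤ (D : ℤ) * (1 + (sigma : ℤ)) := by
      intro j
      have hcoleq : (fun t => b (e t) - ∑ i ∈ notL, (x i : ℤ) * v i (e t))
          = fun t => ∑ a, ((fun a => (x (c a) : ℤ)) a) • N t a := by
        funext t
        have hsol_t : ∑ i, (x i : ℤ) * v i (e t) = b (e t) := by
          have h5 := congrFun hxsol (e t)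
          simpa [Finset.sum_apply] using h5
        have hsplit := Finset.sum_filter_add_sum_filter_not Finset.univ
          (fun i => D ≤ x i) (fun i => (x i : ℤ) * v i (e t))
        have hLim : L = Finset.univ.image c := by
          ext i
          constructor
          · intro hi
            obtain ⟨a, ha⟩ := hcrange i hi
            exact Finset.mem_image.mpr ⟨a, Finset.mem_univ _, ha⟩
          · intro hi
            obtain ⟨a, _, rfl⟩ := Finset.mem_image.mp hi
            exact hcmem a
        have hLsum : ∑ i ∈ L, (x i : ℤ) * v i (e t)
            = ∑ a : Fin s, (x (c a) : ℤ) * v (c a) (e t) := by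
          rw [hLim, Finset.sum_image (fun a _ a' _ h => hcinj h)]
        have h6 : ∑ a : Fin s, ((fun a => (x (c a) : ℤ)) a) • N t a
            = ∑ a : Fin s, (x (c a) : ℤ) * v (c a) (e t) := by
          refine Finset.sum_congr rfl fun a _ => ?_
          rw [hNdef]
          simp [Matrix.of_apply]
        rw [h6, ← hLsum]
        have h7 : ∑ i ∈ L, (x i : ℤ) * v i (e t)
            = (∑ i, (x i : ℤ) * v i (e t)) - ∑ i ∈ notL, (x i : ℤ) * v i (e t) := by
          rw [← hsplit]
          rw [hLdef, hnotLdef]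
          ring
        rw [h7, hsol_t]
      have hdetEq : N.det * (x (c j) : ℤ)
          = (N.updateCol j (fun t => b (e t) - ∑ i ∈ notL, (x i : ℤ) * v i (e t))).det := by
        rw [hcoleq, Matrix.det_updateCol_sum]
        simp only [smul_eq_mul]
        ring
      -- bound the numerator determinant
      set Psi : (Fin s → ℤ) →ₗ[ℤ] ℤ :=
        { toFun := fun d => (N.updateCol j d).det
          map_add' := Matrix.det_updateCol_add N j
          map_smul' := fun r d => by
            simp only [RingHom.id_apply, smul_eq_mul]
            exact Matrix.det_updateCol_smul N j r d } with hPsi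
      have hnum : |(N.updateCol j
          (fun t => b (e t) - ∑ i ∈ notL, (x i : ℤ) * v i (e t))).det|
          ≤ (D : ℤ) * (1 + (sigma : ℤ)) := by
        have hdecomp : (fun t => b (e t) - ∑ i ∈ notL, (x i : ℤ) * v i (e t))
            = (fun t => b (e t)) - ∑ i ∈ notL, (x i : ℤ) • (fun t => v i (e t)) := by
          funext t
          simp [Finset.sum_apply]
        have hval : Psi (fun t => b (e t) - ∑ i ∈ notL, (x i : ℤ) * v i (e t))
            = Psi (fun t => b (e t)) - ∑ i ∈ notL, (x i : ℤ) * Psi (fun t => v i (e t)) := by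
          rw [hdecomp, map_sub, map_sum]
          congr 1
          refine Finset.sum_congr rfl fun i _ => ?_
          rw [_root_.map_smul]
          simp
        have hb_bd : |Psi (fun t => b (e t))| ≤ (D : ℤ) := by
          have heqm : N.updateCol j (fun t => b (e t))
              = Matrix.of fun t a => Sum.elim v (fun _ => b)
                ((Function.update (fun a : Fin s => (Sum.inl (c a) : Fin ℓ ⊕ Unit)) j
                  (Sum.inr ())) a) (e t) := by
            ext t a
            rw [Matrix.updateCol_apply]
            by_cases h : a = j
            · simp [h, Function.update_self]
            · simp [hNdef, h, Function.update_of_ne h]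
          show |(N.updateCol j (fun t => b (e t))).det| ≤ (D : ℤ)
          rw [heqm, Int.abs_eq_natAbs]
          exact_mod_cast hDbound s hsn e e.injective _
        have hv_bd : ∀ i, |Psi (fun t => v i (e t))| ≤ (D : ℤ) := by
          intro i
          have heqm : N.updateCol j (fun t => v i (e t))
              = Matrix.of fun t a => Sum.elim v (fun _ => b)
                ((Function.update (fun a : Fin s => (Sum.inl (c a) : Fin ℓ ⊕ Unit)) j
                  (Sum.inl i)) a) (e t) := by
            ext t a
            rw [Matrix.updateCol_apply]
            by_cases h : a = j
            · simp [h, Function.update_self]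
            · simp [hNdef, h, Function.update_of_ne h]
          show |(N.updateCol j (fun t => v i (e t))).det| ≤ (D : ℤ)
          rw [heqm, Int.abs_eq_natAbs]
          exact_mod_cast hDbound s hsn e e.injective _
        show |Psi (fun t => b (e t) - ∑ i ∈ notL, (x i : ℤ) * v i (e t))|
          ≤ (D : ℤ) * (1 + (sigma : ℤ))
        rw [hval]
        calc |Psi (fun t => b (e t)) - ∑ i ∈ notL, (x i : ℤ) * Psi (fun t => v i (e t))|
            ≤ |Psi (fun t => b (e t))| + |∑ i ∈ notL, (x i : ℤ) * Psi (fun t => v i (e t))| :=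
              abs_sub _ _
          _ ≤ (D : ℤ) + ∑ i ∈ notL, (x i : ℤ) * (D : ℤ) := by
              refine add_le_add hb_bd ?_
              calc |∑ i ∈ notL, (x i : ℤ) * Psi (fun t => v i (e t))|
                  ≤ ∑ i ∈ notL, |(x i : ℤ) * Psi (fun t => v i (e t))| :=
                    Finset.abs_sum_le_sum_abs _ _
                _ ≤ ∑ i ∈ notL, (x i : ℤ) * (D : ℤ) := by
                    refine Finset.sum_le_sum fun i _ => ?_
                    rw [abs_mul, abs_of_nonneg (by positivity : (0:ℤ) ≤ (x i : ℤ))]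
                    exact mul_le_mul_of_nonneg_left (hv_bd i) (by positivity)
          _ = (D : ℤ) * (1 + (sigma : ℤ)) := by
              rw [← Finset.sum_mul, hsigma]
              push_cast
              ring
      have h1le : (1 : ℤ) ≤ |N.det| := Int.one_le_abs hNdet
      calc (x (c j) : ℤ) ≤ |N.det| * (x (c j) : ℤ) := le_mul_of_one_le_left (by positivity) h1le
        _ = |N.det * (x (c j) : ℤ)| := by
            rw [abs_mul, abs_of_nonneg (by positivity : (0:ℤ) ≤ (x (c j) : ℤ))]
        _ = |(N.updateCol j (fun t => b (e t)
              - ∑ i ∈ notL, (x i : ℤ) * v i (e t))).det| := by rw [hdetEq]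
        _ ≤ (D : ℤ) * (1 + (sigma : ℤ)) := hnum
    -- convert and count
    have hkeyN : ∀ j : Fin s, x (c j) ≤ D * (1 + sigma) := by
      intro j
      have := hkey j
      exact_mod_cast (by push_cast; exact this : ((x (c j) : ℕ) : ℤ) ≤ ((D * (1 + sigma) : ℕ) : ℤ))
    have hLbound : ∀ i ∈ L, x i ≤ D * (1 + sigma) := by
      intro i hi
      obtain ⟨a, rfl⟩ := hcrange i hi
      exact hkeyN a
    have hnotLb : ∀ i ∈ notL, x i ≤ D - 1 := by
      intro i hi
      have h1 : ¬ D ≤ x i := (Finset.mem_filter.mp hi).2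
      omega
    have hsigma_le : sigma ≤ ℓ * (D - 1) := by
      calc sigma ≤ ∑ _i ∈ notL, (D - 1) := Finset.sum_le_sum hnotLb
        _ = notL.card * (D - 1) := by rw [Finset.sum_const, smul_eq_mul]
        _ ≤ ℓ * (D - 1) := by
            have : notL.card ≤ ℓ := le_trans (Finset.card_filter_le _ _) (by simp)
            exact Nat.mul_le_mul_right _ this
    have hLsum_le : ∑ i ∈ L, x i ≤ s * (D * (1 + sigma)) := by
      calc ∑ i ∈ L, x i ≤ ∑ _i ∈ L, (D * (1 + sigma)) := Finset.sum_le_sum hLbound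
        _ = s * (D * (1 + sigma)) := by rw [Finset.sum_const, smul_eq_mul, hs]
    have hN0split : N₀ = (∑ i ∈ L, x i) + sigma := by
      rw [← hxN, hsigma, hLdef, hnotLdef]
      exact (Finset.sum_filter_add_sum_filter_not Finset.univ _ _).symm
    have hfinal : N₀ ≤ 2 * ℓ * n * D ^ 2 := by
      have hd : D = (D - 1) + 1 := by omega
      set d := D - 1 with hdd
      have h1 : N₀ ≤ n * ((d + 1) * (1 + ℓ * d)) + ℓ * d := by
        calc N₀ = (∑ i ∈ L, x i) + sigma := hN0split
          _ ≤ s * (D * (1 + sigma)) + sigma := by omega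
          _ ≤ n * (D * (1 + ℓ * d)) + ℓ * d := by
              have h2 : D * (1 + sigma) ≤ D * (1 + ℓ * d) := by
                apply Nat.mul_le_mul_left
                omega
              have h3 : s * (D * (1 + sigma)) ≤ n * (D * (1 + ℓ * d)) :=
                Nat.mul_le_mul hsn h2
              omega
          _ = n * ((d + 1) * (1 + ℓ * d)) + ℓ * d := by rw [← hd]
      calc N₀ ≤ n * ((d + 1) * (1 + ℓ * d)) + ℓ * d := h1
        _ ≤ 2 * ℓ * n * (d + 1) ^ 2 := by
            have ha1 : n ≤ ℓ * n := Nat.le_mul_of_pos_left n hl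
            have ha2 : n * d ≤ (ℓ * n) * d := Nat.mul_le_mul_right d ha1
            have ha3 : ℓ * d ≤ (ℓ * d) * n := Nat.le_mul_of_pos_right (ℓ * d) hn
            nlinarith [ha1, ha2, ha3]
        _ = 2 * ℓ * n * D ^ 2 := by rw [← hd]
    refine ⟨x, hxsol, ?_⟩
    rw [hxN]
    calc N₀ ≤ 2 * ℓ * n * D ^ 2 := hfinal
      _ ≤ 2 * ℓ * n * min (n ^ n) (k ^ (2 * n - 2)) := Nat.mul_le_mul_left _ hDsq
end

section
/- Let n ≥ 1 and k ≥ 1 be integers, and let A be an n × n matrix with real entries, all of absolute value at most 1, such that every column of A, with at most one exception, has at most k non-zero entries. Then |det A| ≤ k^{n−1}. -/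
/-- If `A` is an `n × n` real matrix (`n ≥ 1`) with all entries of absolute value at
most `1`, and every column of `A`, with at most one exception, has at most `k` non-zero
entries (`k ≥ 1`), then `|det A| ≤ k^(n−1)`. -/
theorem stmt4 (n k : ℕ) (hn : 1 ≤ n) (hk : 1 ≤ k) (A : Matrix (Fin n) (Fin n) ℝ)
    (hA : ∀ i j, |A i j| ≤ 1)
    (hcol : ∃ j₀ : Fin n, ∀ j : Fin n, j ≠ j₀ →
      (Finset.univ.filter fun i : Fin n => A i j ≠ 0).card ≤ k) :
    |A.det| ≤ (k : ℝ) ^ (n - 1) := by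
  classical
  obtain ⟨j₀, hj₀⟩ := hcol
  set S : Fin n → Finset (Fin n) := fun j => Finset.univ.filter (fun i => A i j ≠ 0) with hS
  set T : Finset (Equiv.Perm (Fin n)) :=
    Finset.univ.filter (fun σ => ∀ i, i ≠ j₀ → A (σ i) i ≠ 0) with hT
  have habs : ∀ σ : Equiv.Perm (Fin n),
      |(Equiv.Perm.sign σ : ℝ) * ∏ i, A (σ i) i| = ∏ i, |A (σ i) i| := by
    intro σ
    rw [abs_mul, Finset.abs_prod]
    rcases Int.units_eq_one_or (Equiv.Perm.sign σ) with h | h <;> simp [h]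
  have hdet : |A.det| ≤ (T.card : ℝ) := by
    rw [Matrix.det_apply]
    refine le_trans (Finset.abs_sum_le_sum_abs _ _) ?_
    have hsmul : ∀ σ : Equiv.Perm (Fin n),
        |Equiv.Perm.sign σ • ∏ i, A (σ i) i| = ∏ i, |A (σ i) i| := by
      intro σ
      rw [Units.smul_def, zsmul_eq_mul]
      exact habs σ
    calc ∑ σ : Equiv.Perm (Fin n), |Equiv.Perm.sign σ • ∏ i, A (σ i) i|
        = ∑ σ : Equiv.Perm (Fin n), ∏ i, |A (σ i) i| := by
          exact Finset.sum_congr rfl fun σ _ => hsmul σ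
      _ = ∑ σ ∈ T, ∏ i, |A (σ i) i| := by
          refine (Finset.sum_filter_of_ne ?_).symm
          intro σ _ hne
          by_contra h
          push_neg at h
          obtain ⟨i, hi, hzero⟩ := h
          exact hne (Finset.prod_eq_zero (Finset.mem_univ i) (by simp [hzero]))
      _ ≤ ∑ σ ∈ T, (1 : ℝ) := by
          refine Finset.sum_le_sum fun σ _ => ?_
          refine Finset.prod_le_one (fun i _ => abs_nonneg _) (fun i _ => hA _ _)
      _ = (T.card : ℝ) := by simp
  refine hdet.trans ?_
  have hcard : T.card ≤ k ^ (n - 1) := by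
    have hinj : Set.InjOn (fun (σ : Equiv.Perm (Fin n)) => fun i : {i : Fin n // i ≠ j₀} => σ i.1)
        (T : Set (Equiv.Perm (Fin n))) := by
      intro σ hσ τ hτ h
      have heq : ∀ i : Fin n, i ≠ j₀ → σ i = τ i := fun i hi =>
        congrFun h ⟨i, hi⟩
      have hj : σ j₀ = τ j₀ := by
        by_contra hne
        set m := τ.symm (σ j₀) with hm
        have hτm : τ m = σ j₀ := τ.apply_symm_apply _
        have hmne : m ≠ j₀ := by
          intro hmeq
          rw [hmeq] at hτm
          exact hne hτm.symm
        have : σ m = σ j₀ := by rw [heq m hmne, hτm]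
        exact hmne (σ.injective this)
      refine Equiv.ext fun i => ?_
      by_cases hi : i = j₀
      · rw [hi]; exact hj
      · exact heq i hi
    have hmaps : ∀ σ ∈ T, (fun i : {i : Fin n // i ≠ j₀} => σ i.1) ∈
        Fintype.piFinset (fun i : {i : Fin n // i ≠ j₀} => S i.1) := by
      intro σ hσ
      rw [Fintype.mem_piFinset]
      intro i
      rw [hT, Finset.mem_filter] at hσ
      simp only [hS, Finset.mem_filter, Finset.mem_univ, true_and]
      exact hσ.2 i.1 i.2
    have h1 : T.card ≤ (Fintype.piFinset (fun i : {i : Fin n // i ≠ j₀} => S i.1)).card :=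
      Finset.card_le_card_of_injOn _ hmaps hinj
    refine h1.trans ?_
    rw [Fintype.card_piFinset]
    calc ∏ i : {i : Fin n // i ≠ j₀}, (S i.1).card
        ≤ ∏ _i : {i : Fin n // i ≠ j₀}, k :=
          Finset.prod_le_prod' fun i _ => hj₀ i.1 i.2
      _ = k ^ (Fintype.card {i : Fin n // i ≠ j₀}) := by
          rw [Finset.prod_const, Finset.card_univ]
      _ = k ^ (n - 1) := by
          congr 1
          simp [Fintype.card_subtype_compl]
  calc (T.card : ℝ) ≤ ((k ^ (n - 1) : ℕ) : ℝ) := by exact_mod_cast hcard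
    _ = (k : ℝ) ^ (n - 1) := by push_cast; ring
end

section
/- Let n ≥ 1 be an integer, let v₁, …, v_t ∈ {0, 1, −1}^n (t ≥ 1) be column vectors that are linearly independent over ℝ, let k be the maximum number of non-zero entries in any of these vectors, and let N = min{n^{n/2}, k^{n−1}}. Let u ∈ ℝ^n be a vector whose entries have maximum absolute value c, and suppose α₁v₁ + … + α_t v_t = u for real numbers α₁, …, α_t. Then |α_i| ≤ c·N for every i ∈ {1, …, t}. -/
open Finset

lemma aux_hadamard (m : ℕ) (A : Matrix (Fin m) (Fin m) ℝ) :
    |A.det| ≤ ∏ j, Real.sqrt (∑ i, (A i j)^2) := by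
  cases m with
  | zero => simp [Matrix.det_fin_zero]
  | succ m =>
    haveI : Fact (Module.finrank ℝ (EuclideanSpace ℝ (Fin (m+1))) = m + 1) :=
      ⟨finrank_euclideanSpace_fin⟩
    set E := EuclideanSpace ℝ (Fin (m+1))
    let e : OrthonormalBasis (Fin (m+1)) ℝ E := EuclideanSpace.basisFun (Fin (m+1)) ℝ
    let o : Orientation ℝ E (Fin (m+1)) := e.toBasis.orientation
    let w : Fin (m+1) → E := fun j => (EuclideanSpace.equiv (Fin (m+1)) ℝ).symm (fun i => A i j)
    have h1 : |o.volumeForm w| = |e.toBasis.det w| := o.volumeForm_robust' e w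
    have h2 : |o.volumeForm w| ≤ ∏ i, ‖w i‖ := o.abs_volumeForm_apply_le w
    have h3 : e.toBasis.det w = A.det := by
      rw [Module.Basis.det_apply]
      congr 1
    have h4 : ∀ j, ‖w j‖ = Real.sqrt (∑ i, (A i j)^2) := by
      intro j
      rw [EuclideanSpace.norm_eq]
      congr 1
      refine Finset.sum_congr rfl fun i _ => ?_
      rw [Real.norm_eq_abs, sq_abs]
      rfl
    calc |A.det| = |o.volumeForm w| := by rw [h1, h3]
    _ ≤ ∏ i, ‖w i‖ := h2
    _ = _ := Finset.prod_congr rfl fun j _ => h4 j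


open Finset

lemma aux_sparse (k : ℕ) (c : ℝ) (hc : 0 ≤ c) :
    ∀ (m : ℕ) (A : Matrix (Fin (m+1)) (Fin (m+1)) ℝ) (i0 : Fin (m+1)),
    (∀ i, |A i i0| ≤ c) →
    (∀ j, j ≠ i0 → ∀ i, A i j = 0 ∨ A i j = 1 ∨ A i j = -1) →
    (∀ j, j ≠ i0 → (Finset.univ.filter fun i => A i j ≠ 0).card ≤ k) →
    |A.det| ≤ c * (k : ℝ) ^ m := by
  intro m
  induction m with
  | zero =>
    intro A i0 h1 _ _
    rw [Matrix.det_fin_one, pow_zero, mul_one]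
    simpa [Subsingleton.elim (0 : Fin 1) i0] using h1 0
  | succ m ih =>
    intro A i0 h1 h2 h3
    obtain ⟨j, hj⟩ := exists_ne i0
    obtain ⟨i0', hi0'⟩ := Fin.exists_succAbove_eq hj.symm
    have hjs : ∀ s : Fin (m+1), s ≠ i0' → j.succAbove s ≠ i0 := by
      intro s hs h
      exact hs (Fin.succAbove_right_injective (h.trans hi0'.symm))
    have key : ∀ i : Fin (m+2), |Matrix.det (A.submatrix i.succAbove j.succAbove)| ≤ c * k ^ m := by
      intro i
      apply ih
      · intro r
        rw [Matrix.submatrix_apply, hi0']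
        exact h1 _
      · intro s hs r
        rw [Matrix.submatrix_apply]
        exact h2 _ (hjs s hs) _
      · intro s hs
        calc ((Finset.univ.filter fun r => A.submatrix i.succAbove j.succAbove r s ≠ 0).card)
            ≤ (Finset.univ.filter fun r => A r (j.succAbove s) ≠ 0).card := by
              apply Finset.card_le_card_of_injOn (fun r => i.succAbove r)
              · intro r hr
                simp only [Finset.coe_filter, Set.mem_setOf_eq, Finset.mem_univ, true_and] at hr ⊢
                exact hr
              · exact Fin.succAbove_right_injective.injOn
          _ ≤ k := h3 _ (hjs s hs)
    have habs1 : ∀ i, |A i j| ≤ 1 := by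
      intro i
      rcases h2 j hj i with h | h | h <;> rw [h] <;> norm_num
    rw [Matrix.det_succ_column A j]
    calc |∑ i : Fin (m+2), (-1 : ℝ) ^ (i + j : ℕ) * A i j * Matrix.det (A.submatrix i.succAbove j.succAbove)|
        ≤ ∑ i : Fin (m+2), |(-1 : ℝ) ^ (i + j : ℕ) * A i j * Matrix.det (A.submatrix i.succAbove j.succAbove)| :=
          Finset.abs_sum_le_sum_abs _ _
      _ ≤ ∑ i : Fin (m+2), |A i j| * (c * k ^ m) := by
          refine Finset.sum_le_sum fun i _ => ?_
          rw [abs_mul, abs_mul, abs_pow, abs_neg, abs_one, one_pow, one_mul]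
          exact mul_le_mul_of_nonneg_left (key i) (abs_nonneg _)
      _ = (∑ i, |A i j|) * (c * k ^ m) := by rw [Finset.sum_mul]
      _ ≤ (k : ℝ) * (c * k ^ m) := by
          refine mul_le_mul_of_nonneg_right ?_ (by positivity)
          calc (∑ i, |A i j|)
              = ∑ i ∈ Finset.univ.filter (fun i => A i j ≠ 0), |A i j| := by
                refine (Finset.sum_filter_of_ne ?_).symm
                intro i _ h
                simpa using fun h0 => h (by rw [h0]; simp)
            _ ≤ ∑ i ∈ Finset.univ.filter (fun i => A i j ≠ 0), 1 :=
                Finset.sum_le_sum fun i _ => habs1 i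
            _ = ((Finset.univ.filter fun i => A i j ≠ 0).card : ℝ) := by simp
            _ ≤ k := by exact_mod_cast h3 j hj
      _ = c * (k : ℝ) ^ (m + 1) := by ring

open Matrix

lemma aux_intdet (m : ℕ) (A : Matrix (Fin m) (Fin m) ℝ)
    (h : ∀ i j, A i j = 0 ∨ A i j = 1 ∨ A i j = -1) (hd : A.det ≠ 0) : 1 ≤ |A.det| := by
  classical
  let B : Matrix (Fin m) (Fin m) ℤ :=
    fun i j => if A i j = 0 then 0 else if A i j = 1 then 1 else -1
  have hAB : A = B.map (Int.cast) := by
    ext i j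
    rcases h i j with h' | h' | h' <;> rw [Matrix.map_apply] <;> simp [B, h'] <;> norm_num
  have hdet : A.det = ((B.det : ℤ) : ℝ) := by
    rw [hAB]
    exact (RingHom.map_det (Int.castRingHom ℝ) B).symm
  have hB : B.det ≠ 0 := by
    intro h0
    exact hd (by rw [hdet, h0, Int.cast_zero])
  rw [hdet, ← Int.cast_abs]
  exact_mod_cast Int.one_le_abs hB

lemma aux_submatrix (t n : ℕ) (v : Fin t → Fin n → ℝ) (hli : LinearIndependent ℝ v) :
    ∃ g : Fin t → Fin n, Function.Injective g ∧
      Matrix.det (Matrix.of fun j i => v i (g j)) ≠ 0 := by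
  classical
  let c : Fin n → (Fin t → ℝ) := fun j i => v i j
  let M : Matrix (Fin t) (Fin n) ℝ := Matrix.of v
  have hM : M.rank = t := by
    have : LinearIndependent ℝ M := hli
    simpa using this.rank_matrix
  have hW : Submodule.span ℝ (Set.range c) = ⊤ := by
    apply Submodule.eq_top_of_finrank_eq
    have h2 := Matrix.rank_eq_finrank_span_cols M
    rw [hM] at h2
    have hcc : Set.range c = Set.range M.col := rfl
    rw [hcc, ← h2]
    simp [Module.finrank_fintype_fun_eq_card]
  obtain ⟨b, hbsub, hbspan, hbli⟩ := exists_linearIndependent ℝ (Set.range c)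
  have hbfin : b.Finite := (Set.finite_range c).subset hbsub
  haveI := hbfin.fintype
  have hbspan' : Submodule.span ℝ (Set.range ((↑) : b → (Fin t → ℝ))) = ⊤ := by
    rw [Subtype.range_coe, hbspan, hW]
  have hcard : Fintype.card b = t := by
    have := Module.finrank_eq_card_basis (Module.Basis.mk hbli (by rw [hbspan']))
    simpa [Module.finrank_fintype_fun_eq_card] using this.symm
  let e : Fin t ≃ b := (Fintype.equivFinOfCardEq hcard).symm
  have hsel : ∀ i : Fin t, ∃ j : Fin n, c j = (e i : Fin t → ℝ) := fun i => hbsub (e i).2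
  choose g hg using hsel
  have hge : ∀ i, (Matrix.of fun j i' => v i' (g j)) i = ((e i : Fin t → ℝ)) := by
    intro i
    funext i'
    have := congrFun (hg i) i'
    simpa [c] using this
  have hlin : LinearIndependent ℝ (fun i : Fin t => (Matrix.of fun j i' => v i' (g j)) i) := by
    have : LinearIndependent ℝ (fun i : Fin t => ((e i : Fin t → ℝ))) :=
      hbli.comp e e.injective
    simpa only [hge] using this
  refine ⟨g, ?_, ?_⟩
  · intro i1 i2 h12
    apply e.injective
    apply Subtype.ext
    rw [← hg i1, ← hg i2]
    exact congrArg c h12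
  · have := Matrix.linearIndependent_rows_iff_isUnit.mp hlin
    exact (Matrix.isUnit_iff_isUnit_det _).mp this |>.ne_zero

/-- Let `v₁, …, v_t ∈ {0,1,−1}^n` (`n, t ≥ 1`) be linearly independent over `ℝ`, let `k` be
the maximum number of non-zero entries in any of them, and `N = min {n^(n/2), k^(n−1)}`.
If `u ∈ ℝ^n` has maximum absolute value of entries `c` and `α₁v₁ + … + α_t v_t = u`,
then `|α_i| ≤ c·N` for all `i`. -/
theorem stmt5 (n t : ℕ) (hn : 1 ≤ n) (ht : 1 ≤ t)
    (v : Fin t → Fin n → ℝ)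
    (hv : ∀ i j, v i j = 0 ∨ v i j = 1 ∨ v i j = -1)
    (hli : LinearIndependent ℝ v)
    (k : ℕ)
    (hk : IsGreatest
      (Set.range fun i : Fin t => (Finset.univ.filter fun j : Fin n => v i j ≠ 0).card) k)
    (N : ℝ) (hN : N = min ((n : ℝ) ^ ((n : ℝ) / 2)) ((k : ℝ) ^ (n - 1)))
    (u : Fin n → ℝ) (c : ℝ) (hc : IsGreatest (Set.range fun j : Fin n => |u j|) c)
    (α : Fin t → ℝ) (hα : ∑ i, α i • v i = u) :
    ∀ i, |α i| ≤ c * N := by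
  classical
  obtain ⟨m, rfl⟩ : ∃ m, t = m + 1 := ⟨t - 1, (Nat.succ_pred_eq_of_pos ht).symm⟩
  intro i
  -- basic facts
  obtain ⟨j0, hj0⟩ := hc.1
  have hc0 : 0 ≤ c := hj0 ▸ abs_nonneg _
  have hu : ∀ j, |u j| ≤ c := fun j => hc.2 ⟨j, rfl⟩
  have htn : (m+1) ≤ n := by
    have := hli.fintype_card_le_finrank
    simpa [Module.finrank_fintype_fun_eq_card] using this
  have hk1 : 1 ≤ k := by
    have h0 : v ⟨0, ht⟩ ≠ 0 := hli.ne_zero _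
    have : ∃ j, v ⟨0, ht⟩ j ≠ 0 := by
      by_contra h
      push_neg at h
      exact h0 (funext h)
    obtain ⟨j, hj⟩ := this
    have h1 : 1 ≤ (Finset.univ.filter fun j' : Fin n => v ⟨0, ht⟩ j' ≠ 0).card :=
      Finset.card_pos.mpr ⟨j, Finset.mem_filter.mpr ⟨Finset.mem_univ j, hj⟩⟩
    exact h1.trans (hk.2 ⟨⟨0, ht⟩, rfl⟩)
  obtain ⟨g, hginj, hgdet⟩ := aux_submatrix (m+1) n v hli
  set B : Matrix (Fin (m+1)) (Fin (m+1)) ℝ := Matrix.of fun j i' => v i' (g j) with hBdef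
  set M' : Matrix (Fin (m+1)) (Fin (m+1)) ℝ := B.updateCol i (fun j => u (g j)) with hM'def
  -- Cramer's rule
  have hmul : B.mulVec α = fun j => u (g j) := by
    funext j
    have h := congrFun hα (g j)
    simp only [Finset.sum_apply, Pi.smul_apply, smul_eq_mul] at h
    simp only [Matrix.mulVec, dotProduct, hBdef, Matrix.of_apply]
    rw [← h]
    exact Finset.sum_congr rfl fun i' _ => mul_comm _ _
  have hcr : B.det • α = Matrix.cramer B (fun j => u (g j)) := by
    rw [← hmul, Matrix.cramer_eq_adjugate_mulVec, Matrix.mulVec_mulVec, Matrix.adjugate_mul,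
      Matrix.smul_mulVec, Matrix.one_mulVec]
  have hdi : B.det * α i = M'.det := by
    have := congrFun hcr i
    simpa [Matrix.cramer_apply, hM'def] using this
  have hdet1 : 1 ≤ |B.det| := by
    apply aux_intdet
    · intro j i'
      exact hv i' (g j)
    · exact hgdet
  have hstep : |α i| ≤ |M'.det| := by
    calc |α i| = 1 * |α i| := (one_mul _).symm
      _ ≤ |B.det| * |α i| := by
          exact mul_le_mul_of_nonneg_right hdet1 (abs_nonneg _)
      _ = |M'.det| := by rw [← abs_mul, hdi]
  -- entry facts about M'
  have hM'col : ∀ r, M' r i = u (g r) := by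
    intro r; simp [hM'def, Matrix.updateCol_apply]
  have hM'other : ∀ j' r, j' ≠ i → M' r j' = v j' (g r) := by
    intro j' r hj'
    simp [hM'def, Matrix.updateCol_apply, hj', hBdef]
  -- Bound 1 : Hadamard
  have hbound1 : |M'.det| ≤ c * (n : ℝ) ^ ((n : ℝ) / 2) := by
    have had := aux_hadamard (m+1) M'
    have hfac : ∀ j' : Fin (m+1), Real.sqrt (∑ r, (M' r j') ^ 2) ≤
        if j' = i then c * Real.sqrt (m+1) else Real.sqrt (m+1) := by
      intro j'
      by_cases hji : j' = i
      · subst hji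
        simp only [if_pos rfl]
        have : ∑ r, (M' r j') ^ 2 ≤ ∑ _r : Fin (m+1), c ^ 2 := by
          refine Finset.sum_le_sum fun r _ => ?_
          rw [hM'col r, ← sq_abs]
          exact pow_le_pow_left₀ (abs_nonneg _) (hu _) 2
        calc Real.sqrt (∑ r, (M' r j') ^ 2) ≤ Real.sqrt (∑ _r : Fin (m+1), c ^ 2) :=
              Real.sqrt_le_sqrt this
          _ = c * Real.sqrt (m+1) := by
              rw [Finset.sum_const, Finset.card_univ, Fintype.card_fin, nsmul_eq_mul,
                Real.sqrt_mul (by positivity), Real.sqrt_sq hc0, mul_comm]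
              push_cast
              ring
      · simp only [if_neg hji]
        have : ∑ r, (M' r j') ^ 2 ≤ ∑ _r : Fin (m+1), (1 : ℝ) := by
          refine Finset.sum_le_sum fun r _ => ?_
          rw [hM'other j' r hji]
          rcases hv j' (g r) with h | h | h <;> rw [h] <;> norm_num
        calc Real.sqrt (∑ r, (M' r j') ^ 2) ≤ Real.sqrt (∑ _r : Fin (m+1), (1 : ℝ)) :=
              Real.sqrt_le_sqrt this
          _ = Real.sqrt (m+1) := by simp
    have hprod : (∏ j' : Fin (m+1), Real.sqrt (∑ r, (M' r j') ^ 2)) ≤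
        ∏ j' : Fin (m+1), (if j' = i then c * Real.sqrt (m+1) else Real.sqrt (m+1)) := by
      refine Finset.prod_le_prod (fun j' _ => Real.sqrt_nonneg _) fun j' _ => hfac j'
    have hprodval : (∏ j' : Fin (m+1), (if j' = i then c * Real.sqrt (m+1) else Real.sqrt (m+1)))
        = c * Real.sqrt (m+1) ^ (m+1) := by
      rw [← Finset.mul_prod_erase _ _ (Finset.mem_univ i), if_pos rfl]
      have hrest : ∀ j' ∈ Finset.univ.erase i,
          (if j' = i then c * Real.sqrt (m+1) else Real.sqrt (m+1)) = Real.sqrt (m+1) :=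
        fun j' hj' => if_neg (Finset.ne_of_mem_erase hj')
      rw [Finset.prod_congr rfl hrest, Finset.prod_const,
        Finset.card_erase_of_mem (Finset.mem_univ i), Finset.card_univ, Fintype.card_fin]
      have : ((m : ℝ) + 1) = ((m + 1 : ℕ) : ℝ) := by push_cast; ring
      simp only [Nat.add_sub_cancel]
      rw [pow_succ]
      ring
    have hsq : Real.sqrt ((m:ℕ)+1 : ℕ) ^ (m+1) = ((m+1 : ℕ) : ℝ) ^ (((m+1 : ℕ) : ℝ) / 2) := by
      rw [Real.sqrt_eq_rpow, ← Real.rpow_natCast (((m+1:ℕ):ℝ) ^ ((1:ℝ)/2)) (m+1),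
        ← Real.rpow_mul (by positivity)]
      congr 1
      ring
    have hle : ((m+1 : ℕ) : ℝ) ^ (((m+1 : ℕ) : ℝ) / 2) ≤ (n:ℝ) ^ ((n:ℝ)/2) := by
      have h1 : ((m+1 : ℕ) : ℝ) ^ (((m+1 : ℕ) : ℝ) / 2) ≤ (n:ℝ) ^ (((m+1 : ℕ) : ℝ) / 2) :=
        Real.rpow_le_rpow (by positivity) (by exact_mod_cast htn) (by positivity)
      have h2 : (n:ℝ) ^ (((m+1 : ℕ) : ℝ) / 2) ≤ (n:ℝ) ^ ((n:ℝ)/2) := by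
        apply Real.rpow_le_rpow_of_exponent_le (by exact_mod_cast hn)
        have : ((m+1 : ℕ) : ℝ) ≤ (n : ℝ) := by exact_mod_cast htn
        linarith
      exact h1.trans h2
    calc |M'.det| ≤ ∏ j' : Fin (m+1), Real.sqrt (∑ r, (M' r j') ^ 2) := had
      _ ≤ ∏ j' : Fin (m+1), (if j' = i then c * Real.sqrt (m+1) else Real.sqrt (m+1)) := hprod
      _ = c * Real.sqrt (m+1) ^ (m+1) := hprodval
      _ = c * (((m+1:ℕ):ℝ) ^ (((m+1:ℕ):ℝ)/2)) := by
          rw [← hsq]; norm_num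
      _ ≤ c * (n:ℝ) ^ ((n:ℝ)/2) := mul_le_mul_of_nonneg_left hle hc0
  -- Bound 2 : sparse columns
  have hbound2 : |M'.det| ≤ c * (k:ℝ) ^ (n-1) := by
    have h := aux_sparse k c hc0 m M' i
      (fun r => by rw [hM'col r]; exact hu _)
      (fun j' hj' r => by rw [hM'other j' r hj']; exact hv j' (g r))
      (fun j' hj' => by
        calc ((Finset.univ.filter fun r => M' r j' ≠ 0).card)
            ≤ (Finset.univ.filter fun j'' : Fin n => v j' j'' ≠ 0).card := by
              apply Finset.card_le_card_of_injOn g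
              · intro r hr
                simp only [Finset.coe_filter, Set.mem_setOf_eq, Finset.mem_univ, true_and] at hr ⊢
                rw [hM'other j' r hj'] at hr
                exact hr
              · exact hginj.injOn
          _ ≤ k := hk.2 ⟨j', rfl⟩)
    refine h.trans ?_
    apply mul_le_mul_of_nonneg_left _ hc0
    apply pow_le_pow_right₀ (by exact_mod_cast hk1)
    omega
  rw [hN, mul_min_of_nonneg _ _ hc0]
  exact le_min (hstep.trans hbound1) (hstep.trans hbound2)
end

section
/- Let n ≥ 1 be an integer, let v₁, …, v_ℓ ∈ {0, 1, −1}^n be pairwise distinct non-zero vectors, let b ∈ {0, 1, −1}^n, let k be the maximum number of non-zero entries in any of the vectors v₁, …, v_ℓ, and let N = min{n^{n/2}, k^{n−1}}. Suppose the equation ∑_{i=1}^ℓ x_i v_i = b has a non-negative integer solution, and let (x_1, …, x_ℓ) be a non-negative integer solution with the minimum possible value of ∑_{i=1}^ℓ x_i and, among those, with the minimum number of coordinates exceeding N. Then the vectors v_i with x_i > N are linearly independent over ℝ. -/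
open Matrix Finset

-- AM-GM: product ≤ (avg)^m with avg = 1
lemma amgm_one {m : ℕ} (z : Fin m → ℝ) (hz : ∀ i, 0 ≤ z i) (hsum : ∑ i, z i = m) :
    ∏ i, z i ≤ 1 := by
  rcases Nat.eq_zero_or_pos m with hm | hm
  · subst hm; simp
  have hm' : (0:ℝ) < m := by exact_mod_cast hm
  have h := Real.geom_mean_le_arith_mean_weighted Finset.univ (fun _ => 1/(m:ℝ)) z
    (fun i _ => by positivity) (by simp; field_simp) (fun i _ => hz i)
  have h2 : ∑ i, (1/(m:ℝ)) * z i = 1 := by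
    rw [← Finset.mul_sum, hsum]; field_simp
  rw [h2] at h
  have h3 : (∏ i, z i ^ (1/(m:ℝ))) ^ (m:ℕ) ≤ 1 := by
    exact pow_le_one₀ (Finset.prod_nonneg fun i _ => Real.rpow_nonneg (hz i) _) h
  calc ∏ i, z i = (∏ i, z i ^ (1/(m:ℝ))) ^ (m:ℕ) := by
        rw [← Finset.prod_pow]
        refine Finset.prod_congr rfl fun i _ => ?_
        rw [← Real.rpow_natCast (z i ^ (1/(m:ℝ))), ← Real.rpow_mul (hz i)]
        field_simp
        simp
    _ ≤ 1 := h3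


lemma trace_eq_sum_eig {m : ℕ} {A : Matrix (Fin m) (Fin m) ℝ} (hA : A.IsHermitian) :
    A.trace = ∑ i, hA.eigenvalues i := by
  have h := hA.trace_eq_sum_eigenvalues
  simpa using h

lemma psd_det_le_prod_diag {m : ℕ} {G : Matrix (Fin m) (Fin m) ℝ} (hG : G.PosSemidef)
    (hd : ∀ j, 0 < G j j) : G.det ≤ ∏ j, G j j := by
  set e : Fin m → ℝ := fun j => (Real.sqrt (G j j))⁻¹ with he
  have hsq : ∀ j, Real.sqrt (G j j) * Real.sqrt (G j j) = G j j :=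
    fun j => Real.mul_self_sqrt (le_of_lt (hd j))
  have hspos : ∀ j, 0 < Real.sqrt (G j j) := fun j => Real.sqrt_pos.mpr (hd j)
  have hepos : ∀ j, 0 < e j := fun j => inv_pos.mpr (hspos j)
  set D : Matrix (Fin m) (Fin m) ℝ := Matrix.diagonal e with hD
  have hDh : Dᴴ = D := by
    rw [hD, Matrix.diagonal_conjTranspose]; congr 1
  set C : Matrix (Fin m) (Fin m) ℝ := D * G * D with hC
  have hCpsd : C.PosSemidef := by
    have := hG.mul_mul_conjTranspose_same D
    rwa [hDh] at this
  have hCdiag : ∀ j, C j j = 1 := by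
    intro j
    show (D * G * D) j j = 1
    rw [hD]
    simp only [Matrix.mul_diagonal, Matrix.diagonal_mul]
    rw [he]
    have h1 := hsq j
    have h2 := (hspos j).ne'
    field_simp
    rw [sq, h1]
  have htr : C.trace = m := by
    rw [Matrix.trace]
    unfold Matrix.diag
    rw [Finset.sum_congr rfl fun j _ => hCdiag j]; simp
  have hdetC : C.det ≤ 1 := by
    rw [hCpsd.1.det_eq_prod_eigenvalues]
    push_cast
    apply amgm_one _ (fun i => hCpsd.eigenvalues_nonneg i)
    rw [← trace_eq_sum_eig hCpsd.1, htr]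
  have hdetfact : C.det = (∏ j, e j)^2 * G.det := by
    rw [hC, Matrix.det_mul, Matrix.det_mul, hD, Matrix.det_diagonal]; ring
  have hprod_e : (∏ j, e j)^2 * ∏ j, G j j = 1 := by
    rw [← Finset.prod_pow, ← Finset.prod_mul_distrib]
    apply Finset.prod_eq_one
    intro j _
    have h1 := hsq j
    have h2 := (hspos j).ne'
    rw [he]
    field_simp
    linarith
  have hepos2 : (0:ℝ) < (∏ j, e j)^2 := by
    have : 0 < ∏ j, e j := Finset.prod_pos fun j _ => hepos j
    positivity
  nlinarith [hdetC, hdetfact, hprod_e, hepos2]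

lemma det_sq_le_pow {m : ℕ} (B : Matrix (Fin m) (Fin m) ℝ) {K : ℝ} (hK : 0 ≤ K)
    (h : ∀ j, ∑ i, (B i j)^2 ≤ K) : B.det ^ 2 ≤ K ^ m := by
  rcases eq_or_ne B.det 0 with h0 | h0
  · rw [h0]; norm_num; positivity
  set G : Matrix (Fin m) (Fin m) ℝ := Bᴴ * B with hG
  have hGpsd : G.PosSemidef := Matrix.posSemidef_conjTranspose_mul_self B
  have hGdiag : ∀ j, G j j = ∑ i, (B i j)^2 := by
    intro j
    rw [hG]
    simp [Matrix.mul_apply, Matrix.conjTranspose_apply, sq]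
  have hdpos : ∀ j, 0 < G j j := by
    intro j
    rw [hGdiag j]
    rcases lt_or_eq_of_le (Finset.sum_nonneg fun i _ => sq_nonneg (B i j)) with h1 | h1
    · exact h1
    exfalso
    apply h0
    apply Matrix.det_eq_zero_of_column_eq_zero j
    intro i
    have := (Finset.sum_eq_zero_iff_of_nonneg (fun i _ => sq_nonneg (B i j))).mp h1.symm i (Finset.mem_univ i)
    exact pow_eq_zero_iff (n := 2) (by norm_num) |>.mp this
  have hdet : G.det = B.det ^ 2 := by
    rw [hG, Matrix.det_mul, Matrix.det_conjTranspose]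
    simp [sq]
  calc B.det ^2 = G.det := hdet.symm
    _ ≤ ∏ j, G j j := psd_det_le_prod_diag hGpsd hdpos
    _ ≤ ∏ j : Fin m, K := by
        apply Finset.prod_le_prod (fun j _ => le_of_lt (hdpos j))
        intro j _
        rw [hGdiag j]; exact h j
    _ = K ^ m := by simp


lemma extract_indep {ι V : Type*} [DecidableEq ι] [AddCommGroup V] [Module ℝ V]
    (v : ι → V) (T : Finset ι) :
    ∃ T' : Finset ι, T' ⊆ T ∧ LinearIndependent ℝ (fun i : T' => v i) ∧
      ∀ u : V, (∃ d : ι → ℝ, u = ∑ i ∈ T, d i • v i) →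
        (∃ d : ι → ℝ, u = ∑ i ∈ T', d i • v i) := by
  classical
  induction T using Finset.strongInduction with
  | _ T IH =>
    by_cases hind : LinearIndependent ℝ (fun i : T => v i)
    · exact ⟨T, Finset.Subset.refl T, hind, fun u hu => hu⟩
    rw [Fintype.not_linearIndependent_iff] at hind
    obtain ⟨g, hgsum0, i₀', hgi₀⟩ := hind
    set g' : ι → ℝ := fun i => if h : i ∈ T then g ⟨i, h⟩ else 0 with hg'
    have hgsum : ∑ i ∈ T, g' i • v i = 0 := by
      rw [← Finset.sum_coe_sort T (fun i => g' i • v i)]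
      rw [← hgsum0]
      apply Finset.sum_congr rfl
      intro i _
      congr 1
      simp [hg', i.2]
    have hi₀T : (i₀' : ι) ∈ T := i₀'.2
    have hgi₀' : g' i₀' ≠ 0 := by simpa [hg', i₀'.2] using hgi₀
    obtain ⟨T', hT'sub, hT'ind, hT'rep⟩ := IH (T.erase i₀') (Finset.erase_ssubset hi₀T)
    refine ⟨T', hT'sub.trans (Finset.erase_subset _ _), hT'ind, ?_⟩
    intro u ⟨d, hd⟩
    apply hT'rep
    refine ⟨fun i => d i - (d i₀' / g' i₀') * g' i, ?_⟩
    have key : ∑ i ∈ T, (d i - (d i₀' / g' i₀') * g' i) • v i = u := by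
      rw [Finset.sum_congr rfl (fun i _ => sub_smul (d i) _ (v i)), Finset.sum_sub_distrib, ← hd]
      have : ∑ i ∈ T, ((d i₀' / g' i₀') * g' i) • v i
          = (d i₀' / g' i₀') • ∑ i ∈ T, g' i • v i := by
        rw [Finset.smul_sum]
        exact Finset.sum_congr rfl fun i _ => by rw [smul_smul]
      rw [this, hgsum, smul_zero, sub_zero]
    have hzero : (d i₀' - (d i₀' / g' i₀') * g' i₀') = 0 := by field_simp; ring
    rw [← key, ← Finset.add_sum_erase T _ hi₀T, hzero, zero_smul, zero_add]


set_option maxHeartbeats 1000000 in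
lemma exists_int_dep {ℓ n k : ℕ} (v : Fin ℓ → Fin n → ℝ)
    (hv : ∀ i j, v i j = 0 ∨ v i j = 1 ∨ v i j = -1)
    (hkk : ∀ i, (Finset.univ.filter fun j : Fin n => v i j ≠ 0).card ≤ k)
    (F : Finset (Fin ℓ))
    (hdep : ¬ LinearIndependent ℝ (fun i : F => v i)) :
    ∃ (m : ℕ) (c : Fin ℓ → ℤ), m ≤ n ∧ c ≠ 0 ∧ (∀ i, c i ≠ 0 → i ∈ F) ∧
      (∀ j, ∑ i, (c i : ℝ) * v i j = 0) ∧
      ∀ i, ((c i : ℝ))^2 ≤ ((min m k : ℕ) : ℝ)^m := by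
  classical
  -- integer version of v
  set vz : Fin ℓ → Fin n → ℤ := fun i j => if v i j = 1 then 1 else if v i j = -1 then -1 else 0
    with hvzdef
  have hvz : ∀ i j, ((vz i j : ℤ) : ℝ) = v i j := by
    intro i j
    rcases hv i j with h | h | h <;> simp [hvzdef, h] <;> norm_num
  -- get a dependency
  rw [Fintype.not_linearIndependent_iff] at hdep
  obtain ⟨g, hgsum0, i₀, hgi₀⟩ := hdep
  set istar : Fin ℓ := (i₀ : Fin ℓ) with histar
  have histarF : istar ∈ F := i₀.2
  set g' : Fin ℓ → ℝ := fun i => if h : i ∈ F then g ⟨i, h⟩ else 0 with hg'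
  have hgistar : g' istar ≠ 0 := by
    show (if h : istar ∈ F then g ⟨istar, h⟩ else 0) ≠ 0
    rw [dif_pos histarF]; exact hgi₀
  have hgsum : ∑ i ∈ F, g' i • v i = 0 := by
    rw [← Finset.sum_coe_sort F (fun i => g' i • v i), ← hgsum0]
    exact Finset.sum_congr rfl fun i _ => by congr 1; simp [hg', i.2]
  -- v istar is represented over F.erase istar
  have hrep0 : ∃ d : Fin ℓ → ℝ, v istar = ∑ i ∈ F.erase istar, d i • v i := by
    refine ⟨fun i => -(g' i) / (g' istar), ?_⟩
    have h1 : g' istar • v istar + ∑ i ∈ F.erase istar, g' i • v i = 0 := by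
      rw [Finset.add_sum_erase F (fun i => g' i • v i) histarF]; exact hgsum
    have h2 : ∑ i ∈ F.erase istar, (-(g' i) / g' istar) • v i
        = (-(g' istar)⁻¹) • ∑ i ∈ F.erase istar, g' i • v i := by
      rw [Finset.smul_sum]
      refine Finset.sum_congr rfl fun i _ => ?_
      rw [smul_smul]; congr 1; field_simp
    rw [h2]
    have h3 : ∑ i ∈ F.erase istar, g' i • v i = -(g' istar • v istar) := by
      linear_combination (norm := module) h1
    rw [h3, smul_neg, ← neg_smul, neg_neg, smul_smul]
    rw [inv_mul_cancel₀ hgistar, one_smul]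
  -- extract independent subfamily T'
  obtain ⟨T', hT'sub, hT'ind, hT'rep⟩ := extract_indep v (F.erase istar)
  obtain ⟨d2, hd2⟩ := hT'rep _ hrep0
  have histarT' : istar ∉ T' := fun h => (Finset.notMem_erase istar F) (hT'sub h)
  set m := T'.card with hm
  set eC : Fin m ≃ ↥T' := T'.equivFin.symm with heC
  -- column independence, functional form
  have hcol : ∀ c : Fin m → ℝ, (∀ j, ∑ s, c s * v (eC s) j = 0) → c = 0 := by
    intro c hc
    have hind2 : LinearIndependent ℝ (fun s : Fin m => v (eC s)) :=
      (linearIndependent_equiv eC).mpr hT'ind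
    have := Fintype.linearIndependent_iff.mp hind2 c ?_
    · funext s; exact this s
    · funext j
      rw [Finset.sum_apply]
      simpa using hc j
  -- representation of v istar, reindexed
  have hrep2 : ∀ j, v istar j = ∑ s, d2 (eC s) * v (eC s) j := by
    intro j
    have h1 : v istar j = ∑ i ∈ T', d2 i * v i j := by
      rw [hd2]; rw [Finset.sum_apply]; simp
    rw [h1, ← Finset.sum_coe_sort T' (fun i => d2 i * v i j)]
    exact (Equiv.sum_comp eC (fun i : ↥T' => d2 i * v (i : Fin ℓ) j)).symm
  -- rows
  set r : Fin n → (Fin m → ℝ) := fun j s => v (eC s) j with hr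
  obtain ⟨R, _, hRind, hRrep⟩ := extract_indep r Finset.univ
  have hrepj : ∀ j : Fin n, ∃ dj : Fin n → ℝ, r j = ∑ j' ∈ R, dj j' • r j' := by
    intro j
    apply hRrep
    refine ⟨fun j' => if j' = j then 1 else 0, ?_⟩
    simp [ite_smul]
  -- kernel property over R rows
  have hker : ∀ c : Fin m → ℝ, (∀ j ∈ R, ∑ s, c s * v (eC s) j = 0) → c = 0 := by
    intro c hc
    apply hcol
    intro j
    obtain ⟨dj, hdj⟩ := hrepj j
    have : ∀ s, v (eC s) j = ∑ j' ∈ R, dj j' * v (eC s) j' := by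
      intro s
      have := congrFun hdj s
      simpa [hr, Finset.sum_apply] using this
    calc ∑ s, c s * v (eC s) j = ∑ s, ∑ j' ∈ R, c s * (dj j' * v (eC s) j') := by
          refine Finset.sum_congr rfl fun s _ => ?_
          rw [this s, Finset.mul_sum]
      _ = ∑ j' ∈ R, dj j' * ∑ s, c s * v (eC s) j' := by
          rw [Finset.sum_comm]
          refine Finset.sum_congr rfl fun j' _ => ?_
          rw [Finset.mul_sum]
          refine Finset.sum_congr rfl fun s _ => ?_
          ring
      _ = 0 := by
          refine Finset.sum_eq_zero fun j' hj' => ?_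
          rw [hc j' hj', mul_zero]
  -- R.card = m
  have hcard : R.card = m := by
    have h1 : R.card ≤ m := by
      have := hRind.fintype_card_le_finrank
      rwa [Module.finrank_pi, Fintype.card_coe, Fintype.card_fin] at this
    have h2 : m ≤ R.card := by
      have hind3 : LinearIndependent ℝ (fun s : Fin m => (fun j : ↥R => v (eC s) j)) := by
        rw [Fintype.linearIndependent_iff]
        intro c hc s
        have : c = 0 := by
          apply hker
          intro j hj
          have := congrFun hc ⟨j, hj⟩
          rw [Finset.sum_apply] at this
          simpa using this
        rw [this]; rfl
      have := hind3.fintype_card_le_finrank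
      rwa [Module.finrank_pi, Fintype.card_coe, Fintype.card_fin] at this
    omega
  set eR : Fin m ≃ ↥R := (finCongr hcard.symm).trans R.equivFin.symm with heR
  -- integer matrices
  set Bz : Matrix (Fin m) (Fin m) ℤ := Matrix.of fun p s => vz (eC s) (eR p) with hBz
  set wz : Fin m → ℤ := fun p => vz istar (eR p) with hwz
  set cz : Fin m → ℤ := Bz.cramer wz with hcz
  set detz : ℤ := Bz.det with hdetz
  have hcramer : Bz.mulVec cz = detz • wz := Matrix.mulVec_cramer Bz wz
  -- detz ≠ 0
  have hdetz0 : detz ≠ 0 := by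
    intro h0
    have hdetR : (Bz.map (Int.cast : ℤ → ℝ)).det = 0 := by
      have h1 : (Bz.map (Int.cast : ℤ → ℝ)).det = ((Bz.det : ℤ) : ℝ) := by
        rw [show Bz.map (Int.cast : ℤ → ℝ) = (Int.castRingHom ℝ).mapMatrix Bz from rfl,
          ← RingHom.map_det]
        simp
      rw [h1, ← hdetz, h0]; simp
    obtain ⟨c, hc0, hcmul⟩ := (Matrix.exists_mulVec_eq_zero_iff).mpr hdetR
    apply hc0
    apply hker
    intro j hj
    have hp := congrFun hcmul (eR.symm ⟨j, hj⟩)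
    simp only [Matrix.mulVec, dotProduct, Pi.zero_apply] at hp
    simp only [Matrix.map_apply, hBz, Matrix.of_apply] at hp
    have heq : (eR (eR.symm ⟨j, hj⟩) : Fin n) = j := by rw [Equiv.apply_symm_apply]
    rw [heq] at hp
    rw [← hp]
    refine Finset.sum_congr rfl fun s _ => ?_
    rw [hvz, mul_comm]
  -- key: cz = detz • d2 ∘ eC, giving the relation on all rows
  have hrel : ∀ j, ∑ s, (cz s : ℝ) * v (eC s) j = (detz : ℝ) * v istar j := by
    have hu : (fun s => (cz s : ℝ) - (detz : ℝ) * d2 (eC s)) = 0 := by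
      apply hker
      intro j hj
      set p := eR.symm ⟨j, hj⟩ with hp
      have heq : (eR p : Fin n) = j := by rw [hp, Equiv.apply_symm_apply]
      have h1 : ∑ s, (cz s : ℝ) * v (eC s) j = (detz : ℝ) * v istar j := by
        have hcr := congrFun hcramer p
        simp only [Matrix.mulVec, dotProduct, Pi.smul_apply, smul_eq_mul] at hcr
        have hcast := congrArg (Int.cast : ℤ → ℝ) hcr
        push_cast at hcast
        rw [← heq]
        calc ∑ s, (cz s : ℝ) * v (eC s) (eR p)
            = ∑ s, ((Bz p s : ℝ) * (cz s : ℝ)) := by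
              refine Finset.sum_congr rfl fun s _ => ?_
              rw [hBz]; simp only [Matrix.of_apply]
              rw [hvz]; ring
          _ = (detz : ℝ) * (wz p : ℝ) := hcast
          _ = (detz : ℝ) * v istar (eR p) := by rw [hwz, hvz]
      have h2 : ∑ s, ((detz : ℝ) * d2 (eC s)) * v (eC s) j = (detz : ℝ) * v istar j := by
        rw [hrep2 j, Finset.mul_sum]
        refine Finset.sum_congr rfl fun s _ => ?_
        ring
      calc ∑ s, ((cz s : ℝ) - (detz : ℝ) * d2 (eC s)) * v (eC s) j
          = ∑ s, (cz s : ℝ) * v (eC s) j - ∑ s, ((detz : ℝ) * d2 (eC s)) * v (eC s) j := by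
            rw [← Finset.sum_sub_distrib]
            refine Finset.sum_congr rfl fun s _ => ?_
            ring
        _ = 0 := by rw [h1, h2]; ring
    intro j
    have : ∀ s, (cz s : ℝ) = (detz : ℝ) * d2 (eC s) := by
      intro s
      have := congrFun hu s
      simp only [Pi.zero_apply] at this
      linarith
    calc ∑ s, (cz s : ℝ) * v (eC s) j = ∑ s, ((detz : ℝ) * d2 (eC s)) * v (eC s) j := by
          exact Finset.sum_congr rfl fun s _ => by rw [this s]
      _ = (detz : ℝ) * v istar j := by
          rw [hrep2 j, Finset.mul_sum]
          exact Finset.sum_congr rfl fun s _ => by ring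
  -- define c
  set c : Fin ℓ → ℤ := fun i => if h : i ∈ T' then cz (eC.symm ⟨i, h⟩)
    else if i = istar then -detz else 0 with hc
  have hcistar : c istar = -detz := by
    simp [hc, histarT']
  have hcT' : ∀ s : Fin m, c (eC s) = cz s := by
    intro s
    simp [hc, (eC s).2, Subtype.coe_eta]
  have hc0 : c ≠ 0 := by
    intro h
    apply hdetz0
    have := congrFun h istar
    rw [hcistar] at this
    simpa using this
  have hsupp : ∀ i, c i ≠ 0 → i ∈ F := by
    intro i hi
    by_cases h1 : i ∈ T'
    · exact Finset.mem_of_mem_erase (hT'sub h1)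
    by_cases h2 : i = istar
    · rw [h2]; exact histarF
    exfalso; apply hi; simp [hc, h1, h2]
  have hzero_out : ∀ i, i ∉ insert istar T' → c i = 0 := by
    intro i hi
    rw [Finset.mem_insert] at hi
    push_neg at hi
    simp [hc, hi.2, hi.1]
  have hsumT' : ∀ j, ∑ i ∈ T', (c i : ℝ) * v i j = ∑ s, (cz s : ℝ) * v (eC s) j := by
    intro j
    rw [← Finset.sum_coe_sort T' (fun i => (c i : ℝ) * v i j)]
    rw [← Equiv.sum_comp eC (fun i : ↥T' => (c (i : Fin ℓ) : ℝ) * v (i : Fin ℓ) j)]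
    exact Finset.sum_congr rfl fun s _ => by rw [hcT' s]
  have hrelation : ∀ j, ∑ i, (c i : ℝ) * v i j = 0 := by
    intro j
    rw [← Finset.sum_subset (Finset.subset_univ (insert istar T'))
      (fun i _ hi => by rw [hzero_out i hi]; simp)]
    rw [Finset.sum_insert histarT', hsumT' j, hrel j, hcistar]
    push_cast
    ring
  -- determinant bound
  have hbnd : ∀ (M : Matrix (Fin m) (Fin m) ℤ), (∀ s, ∃ i', ∀ p, M p s = vz i' (eR p)) →
      ((M.det : ℝ))^2 ≤ ((min m k : ℕ) : ℝ)^m := by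
    intro M hM
    have hdetmap : (M.map (Int.cast : ℤ → ℝ)).det = ((M.det : ℤ) : ℝ) := by
      rw [show M.map (Int.cast : ℤ → ℝ) = (Int.castRingHom ℝ).mapMatrix M from rfl,
        ← RingHom.map_det]
      simp
    rw [← hdetmap]
    apply det_sq_le_pow (M.map (Int.cast : ℤ → ℝ)) (K := ((min m k : ℕ) : ℝ)) (Nat.cast_nonneg _)
    intro s
    obtain ⟨i', hi'⟩ := hM s
    have hent : ∀ p, (M.map (Int.cast : ℤ → ℝ)) p s = v i' (eR p) := by
      intro p
      rw [Matrix.map_apply, hi' p, hvz]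
    have h1 : ∑ p, ((M.map (Int.cast : ℤ → ℝ)) p s)^2 = ∑ j ∈ R, (v i' j)^2 := by
      rw [← Finset.sum_coe_sort R (fun j => (v i' j)^2),
        ← Equiv.sum_comp eR (fun j : ↥R => (v i' (j : Fin n))^2)]
      exact Finset.sum_congr rfl fun p _ => by rw [hent p]
    rw [h1]
    have h2 : ∑ j ∈ R, (v i' j)^2 = ((R.filter fun j => v i' j ≠ 0).card : ℝ) := by
      rw [Finset.sum_congr rfl (fun j _ => show (v i' j)^2 = if v i' j ≠ 0 then (1:ℝ) else 0 by
        rcases hv i' j with h | h | h <;> simp [h] <;> norm_num)]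
      rw [Finset.sum_boole]
    rw [h2]
    have h3 : (R.filter fun j => v i' j ≠ 0).card ≤ min m k := by
      apply le_min
      · exact le_trans (Finset.card_filter_le R _) (le_of_eq hcard)
      · exact le_trans (Finset.card_le_card (Finset.filter_subset_filter _ (Finset.subset_univ R)))
          (hkk i')
    exact_mod_cast h3
  have hbound : ∀ i, ((c i : ℝ))^2 ≤ ((min m k : ℕ) : ℝ)^m := by
    intro i
    by_cases h1 : i ∈ T'
    · have : c i = cz (eC.symm ⟨i, h1⟩) := by simp [hc, h1]
      rw [this, hcz, Matrix.cramer_apply]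
      apply hbnd
      intro s'
      by_cases h2 : s' = eC.symm ⟨i, h1⟩
      · exact ⟨istar, fun p => by rw [Matrix.updateCol_apply, if_pos h2]⟩
      · exact ⟨(eC s' : Fin ℓ), fun p => by rw [Matrix.updateCol_apply, if_neg h2]; rfl⟩
    by_cases h2 : i = istar
    · have h3 : c i = -detz := by rw [h2, hcistar]
      rw [h3]
      have he : (((-detz : ℤ) : ℝ))^2 = ((detz : ℤ) : ℝ)^2 := by push_cast; ring
      rw [he, hdetz]
      apply hbnd
      intro s'
      exact ⟨(eC s' : Fin ℓ), fun p => rfl⟩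
    · have : c i = 0 := by simp [hc, h1, h2]
      rw [this]
      norm_num
  refine ⟨m, c, ?_, hc0, hsupp, hrelation, hbound⟩
  rw [← hcard]
  calc R.card ≤ (Finset.univ : Finset (Fin n)).card := Finset.card_le_univ R
    _ = n := by simp

set_option maxHeartbeats 1000000 in
/-- Let `n ≥ 1`, let `v₁, …, v_ℓ ∈ {0,1,−1}^n` be pairwise distinct non-zero vectors,
`b ∈ {0,1,−1}^n`, `k` the maximum number of non-zero entries in any `vᵢ`, and
`N = min {n^(n/2), k^(n−1)}`. If `(x₁, …, x_ℓ)` is a non-negative integer solution of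
`∑ xᵢ vᵢ = b` with the minimum possible `∑ xᵢ`, and among those with the minimum number of
coordinates exceeding `N`, then the vectors `vᵢ` with `xᵢ > N` are linearly independent
over `ℝ`. -/
theorem stmt7 (n ℓ : ℕ) (hn : 1 ≤ n)
    (v : Fin ℓ → Fin n → ℝ) (b : Fin n → ℝ)
    (hv : ∀ i j, v i j = 0 ∨ v i j = 1 ∨ v i j = -1)
    (hb : ∀ j, b j = 0 ∨ b j = 1 ∨ b j = -1)
    (hdist : Function.Injective v)
    (hnz : ∀ i, v i ≠ 0)
    (k : ℕ)
    (hk : k = Finset.univ.sup fun i : Fin ℓ =>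
      (Finset.univ.filter fun j : Fin n => v i j ≠ 0).card)
    (N : ℝ) (hN : N = min ((n : ℝ) ^ ((n : ℝ) / 2)) ((k : ℝ) ^ (n - 1)))
    (x : Fin ℓ → ℕ) (hx : ∑ i, (x i : ℝ) • v i = b)
    (hminsum : ∀ y : Fin ℓ → ℕ, (∑ i, (y i : ℝ) • v i = b) → ∑ i, x i ≤ ∑ i, y i)
    (hmincard : ∀ y : Fin ℓ → ℕ, (∑ i, (y i : ℝ) • v i = b) → (∑ i, y i = ∑ i, x i) →
      (Finset.univ.filter fun i : Fin ℓ => N < (x i : ℝ)).card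
        ≤ (Finset.univ.filter fun i : Fin ℓ => N < (y i : ℝ)).card) :
    LinearIndependent ℝ (fun i : {i : Fin ℓ // N < (x i : ℝ)} => v i.1) := by
  classical
  by_contra hdep
  set F : Finset (Fin ℓ) := Finset.univ.filter (fun i => N < (x i : ℝ)) with hF
  have hNnn : 0 ≤ N := by
    rw [hN]
    apply le_min
    · exact Real.rpow_nonneg (Nat.cast_nonneg n) _
    · positivity
  -- transfer dependency to subtype over F
  have hdepF : ¬ LinearIndependent ℝ (fun i : F => v i) := by
    intro h
    apply hdep
    have h2 := h.comp
      (fun i : {i : Fin ℓ // N < (x i : ℝ)} =>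
        (⟨i.1, Finset.mem_filter.mpr ⟨Finset.mem_univ _, i.2⟩⟩ : ↥F))
      (by
        intro a b hab
        simp only [Subtype.mk.injEq] at hab
        exact Subtype.ext hab)
    exact h2
  have hkk : ∀ i, (Finset.univ.filter fun j : Fin n => v i j ≠ 0).card ≤ k := by
    intro i; rw [hk]; exact Finset.le_sup (f := fun i => (Finset.univ.filter fun j : Fin n => v i j ≠ 0).card) (Finset.mem_univ i)
  obtain ⟨m, c, hmn, hc0, hsuppF, hrelc, hbd⟩ := exists_int_dep v hv hkk F hdepF
  have hsupp : ∀ i, c i ≠ 0 → N < (x i : ℝ) := by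
    intro i hi
    have := hsuppF i hi
    rw [hF, Finset.mem_filter] at this
    exact this.2
  -- k ≥ 1 and k ≤ n
  have hk1 : 1 ≤ k := by
    obtain ⟨i, hi0⟩ := Function.ne_iff.mp hc0
    have hi : c i ≠ 0 := by simpa using hi0
    have hiF := hsuppF i hi
    obtain ⟨j, hj0⟩ := Function.ne_iff.mp (hnz i)
    have hj : v i j ≠ 0 := by simpa using hj0
    have h1 : 1 ≤ (Finset.univ.filter fun j : Fin n => v i j ≠ 0).card := by
      rw [Nat.one_le_iff_ne_zero, Ne, Finset.card_eq_zero]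
      intro hemp
      have : j ∈ (Finset.univ.filter fun j : Fin n => v i j ≠ 0) := by
        simp [hj]
      rw [hemp] at this; exact absurd this (Finset.notMem_empty j)
    exact le_trans h1 (hkk i)
  have hkn : k ≤ n := by
    rw [hk]
    apply Finset.sup_le
    intro i _
    exact le_trans (Finset.card_filter_le _ _) (by simp)
  -- the bound: |c i| ≤ N
  have hnat : (min m k)^m ≤ n^n ∧ (min m k)^m ≤ k^(2*(n-1)) := by
    constructor
    · calc (min m k)^m ≤ n^m := Nat.pow_le_pow_left (le_trans (min_le_left _ _) hmn) m
        _ ≤ n^n := Nat.pow_le_pow_right (le_trans (by norm_num) hn) hmn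
    · rcases eq_or_lt_of_le hk1 with h1 | h2
      · calc (min m k)^m ≤ 1^m := Nat.pow_le_pow_left (by omega) m
          _ = 1 := one_pow m
          _ ≤ k^(2*(n-1)) := Nat.one_le_pow _ _ (by omega)
      · have hn2 : 2 ≤ n := le_trans h2 hkn
        calc (min m k)^m ≤ k^m := Nat.pow_le_pow_left (min_le_right _ _) m
          _ ≤ k^(2*(n-1)) := Nat.pow_le_pow_right (by omega) (by omega)
  have habs : ∀ i, |(c i : ℝ)| ≤ N := by
    intro i
    have hsq : ((c i : ℝ))^2 ≤ N^2 := by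
      have h1 : ((c i : ℝ))^2 ≤ (((min m k)^m : ℕ) : ℝ) := by
        have h0 := hbd i; push_cast at h0 ⊢
        linarith
      have ha : (((n:ℝ)) ^ ((n:ℝ)/2))^2 = ((n^n : ℕ) : ℝ) := by
        rw [← Real.rpow_natCast ((n:ℝ) ^ ((n:ℝ)/2)) 2, ← Real.rpow_mul (Nat.cast_nonneg n)]
        have hexp : (n:ℝ)/2 * ((2:ℕ):ℝ) = ((n:ℕ):ℝ) := by push_cast; ring
        rw [hexp, Real.rpow_natCast]
        push_cast
        ring
      have hbsq : (((k:ℝ)) ^ (n-1))^2 = ((k^(2*(n-1)) : ℕ) : ℝ) := by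
        rw [← pow_mul]
        push_cast
        ring
      have h2 : N^2 = min ((((n:ℝ)) ^ ((n:ℝ)/2))^2) ((((k:ℝ)) ^ (n-1))^2) := by
        rw [hN]
        rcases min_cases ((n : ℝ) ^ ((n : ℝ) / 2)) ((k : ℝ) ^ (n - 1)) with ⟨h3, h4⟩ | ⟨h3, h4⟩
        · rw [h3]
          exact (min_eq_left (by nlinarith [Real.rpow_nonneg (Nat.cast_nonneg (α := ℝ) n) ((n:ℝ)/2), pow_nonneg (Nat.cast_nonneg (α := ℝ) k) (n-1)])).symm
        · rw [h3]
          exact (min_eq_right (by nlinarith [Real.rpow_nonneg (Nat.cast_nonneg (α := ℝ) n) ((n:ℝ)/2), pow_nonneg (Nat.cast_nonneg (α := ℝ) k) (n-1)])).symm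
      rw [h2]
      apply le_min
      · rw [ha]
        exact le_trans h1 (by exact_mod_cast hnat.1)
      · rw [hbsq]
        exact le_trans h1 (by exact_mod_cast hnat.2)
    rw [← Real.sqrt_sq_eq_abs]
    calc Real.sqrt ((c i:ℝ)^2) ≤ Real.sqrt (N^2) := Real.sqrt_le_sqrt hsq
      _ = N := Real.sqrt_sq hNnn
  -- key exchange argument
  have hxb : ∀ j, ∑ i, (x i : ℝ) * v i j = b j := by
    intro j
    have h1 := congrFun hx j
    rw [Finset.sum_apply] at h1
    simpa using h1
  have key : ∀ c' : Fin ℓ → ℤ, c' ≠ 0 → (∀ i, c' i ≠ 0 → N < (x i : ℝ)) →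
      (∀ j, ∑ i, (c' i : ℝ) * v i j = 0) → (∀ i, |(c' i : ℝ)| ≤ N) →
      0 ≤ ∑ i, c' i → False := by
    clear hsupp hrelc habs hbd hc0 hsuppF hnat hmn c m
    intro c hc0 hsupp hrel habs hcsum
    rcases eq_or_lt_of_le hcsum with hsum0 | hsumpos
    · -- sum = 0 case
      have hex : ∃ i1, 0 < c i1 := by
        by_contra hno
        push_neg at hno
        apply hc0
        funext i
        exact (Finset.sum_eq_zero_iff_of_nonpos (fun i _ => hno i)).mp hsum0.symm i
          (Finset.mem_univ i)
      obtain ⟨i1, hi1⟩ := hex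
      set P := Finset.univ.filter (fun i => 0 < c i) with hP
      have hPne : P.Nonempty := ⟨i1, by simp [hP, hi1]⟩
      have hex2 : ∀ i, 0 < c i → ∃ t : ℕ, (x i : ℝ) - t * c i ≤ N := by
        intro i hci
        refine ⟨x i, ?_⟩
        have h1 : (1:ℝ) ≤ (c i : ℝ) := by exact_mod_cast hci
        have h2 : (0:ℝ) ≤ (x i : ℝ) := Nat.cast_nonneg _
        nlinarith [hNnn]
      set tf : Fin ℓ → ℕ := fun i => if h : 0 < c i then Nat.find (hex2 i h) else 0 with htf
      obtain ⟨i0, hi0P, hi0min⟩ := Finset.exists_min_image P tf hPne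
      have hci0 : 0 < c i0 := by
        rw [hP, Finset.mem_filter] at hi0P; exact hi0P.2
      set t := tf i0 with ht
      have htspec : (x i0 : ℝ) - t * c i0 ≤ N := by
        have h1 : t = Nat.find (hex2 i0 hci0) := by simp only [ht, htf]; rw [dif_pos hci0]
        rw [h1]
        exact Nat.find_spec (hex2 i0 hci0)
      have hmin' : ∀ i, (h : 0 < c i) → ∀ t' : ℕ, t' < tf i → N < (x i : ℝ) - t' * c i := by
        intro i hci t' ht'
        simp only [htf] at ht'
        rw [dif_pos hci] at ht'
        have h2 := Nat.find_min (hex2 i hci) ht'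
        push_neg at h2
        linarith
      have htpos : 1 ≤ t := by
        by_contra h0
        have ht0 : t = 0 := by omega
        have h1 := hsupp i0 (by omega)
        rw [ht0] at htspec
        push_cast at htspec
        linarith
      have hyge : ∀ i, (0:ℝ) ≤ (x i:ℝ) - t * c i := by
        intro i
        rcases lt_trichotomy (c i) 0 with hlt | heq | hgt
        · have h1 : (c i:ℝ) < 0 := by exact_mod_cast hlt
          have h2 : (0:ℝ) ≤ (t:ℝ) := Nat.cast_nonneg t
          nlinarith [Nat.cast_nonneg (α := ℝ) (x i)]
        · have h1 : (c i : ℝ) = 0 := by exact_mod_cast heq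
          rw [h1]
          simpa using Nat.cast_nonneg (α := ℝ) (x i)
        · have htle : t ≤ tf i := hi0min i (by simp [hP, hgt])
          rcases lt_or_eq_of_le htle with h1 | h1
          · have h2 := hmin' i hgt t h1
            linarith [hNnn]
          · have h2 := hmin' i hgt (t-1) (by omega)
            have h3 : ((t-1 : ℕ):ℝ) = (t:ℝ) - 1 := by
              push_cast [Nat.cast_sub htpos]
              ring
            rw [h3] at h2
            have h4 : (c i:ℝ) ≤ N := le_trans (le_abs_self _) (habs i)
            nlinarith
      set y : Fin ℓ → ℕ := fun i => ((x i:ℤ) - t * c i).toNat with hy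
      have hygeZ : ∀ i, (0:ℤ) ≤ (x i:ℤ) - t * c i := by
        intro i
        have h1 := hyge i
        have h2 : ((0:ℤ):ℝ) ≤ (((x i:ℤ) - t * c i : ℤ) : ℝ) := by push_cast; linarith
        exact_mod_cast h2
      have hyval : ∀ i, ((y i : ℤ)) = (x i : ℤ) - t * c i := fun i =>
        Int.toNat_of_nonneg (hygeZ i)
      have hyvalR : ∀ i, ((y i : ℝ)) = (x i : ℝ) - t * (c i : ℝ) := by
        intro i
        have h1 := congrArg (Int.cast : ℤ → ℝ) (hyval i)
        push_cast at h1
        exact h1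
      have hsol : ∑ i, (y i : ℝ) • v i = b := by
        funext j
        rw [Finset.sum_apply]
        calc ∑ i, ((y i : ℝ) • v i) j = ∑ i, ((x i:ℝ) * v i j - t * ((c i:ℝ) * v i j)) := by
              refine Finset.sum_congr rfl fun i _ => ?_
              rw [Pi.smul_apply, smul_eq_mul, hyvalR i]; ring
          _ = ∑ i, (x i:ℝ) * v i j - t * ∑ i, (c i:ℝ) * v i j := by
              rw [Finset.sum_sub_distrib, Finset.mul_sum]
          _ = b j := by rw [hxb j, hrel j]; ring
      have hysum : ∑ i, y i = ∑ i, x i := by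
        have h1 : (∑ i, (y i:ℤ)) = ∑ i, (x i:ℤ) - t * ∑ i, c i := by
          rw [Finset.sum_congr rfl fun i _ => hyval i, Finset.sum_sub_distrib, Finset.mul_sum]
        rw [← hsum0, mul_zero, sub_zero] at h1
        exact_mod_cast h1
      have hsub : (Finset.univ.filter fun i => N < (y i:ℝ)) ⊆ F := by
        intro i hi
        rw [Finset.mem_filter] at hi
        rw [hF, Finset.mem_filter]
        refine ⟨Finset.mem_univ i, ?_⟩
        by_cases hc : c i = 0
        · have h1 : (y i : ℝ) = (x i : ℝ) := by
            rw [hyvalR i]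
            have : (c i : ℝ) = 0 := by exact_mod_cast hc
            rw [this]; ring
          rw [← h1]; exact hi.2
        · exact hsupp i hc
      have hssub : (Finset.univ.filter fun i => N < (y i:ℝ)) ⊂ F := by
        refine ⟨hsub, fun hcon => ?_⟩
        have hi0F : i0 ∈ F := by
          rw [hF, Finset.mem_filter]
          exact ⟨Finset.mem_univ i0, hsupp i0 (by omega)⟩
        have h1 := hcon hi0F
        rw [Finset.mem_filter] at h1
        have h2 : (y i0 : ℝ) ≤ N := by rw [hyvalR i0]; exact htspec
        linarith [h1.2]
      have hcard := Finset.card_lt_card hssub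
      have h3 := hmincard y hsol hysum
      omega
    · -- sum > 0 case
      set y : Fin ℓ → ℕ := fun i => ((x i : ℤ) - c i).toNat with hy
      have hygeZ : ∀ i, (0:ℤ) ≤ (x i : ℤ) - c i := by
        intro i
        by_cases h : c i = 0
        · rw [h]; simp
        · have h1 : (c i : ℝ) < (x i : ℝ) :=
            lt_of_le_of_lt (le_trans (le_abs_self _) (habs i)) (hsupp i h)
          have h2 : (c i : ℤ) < ((x i : ℕ) : ℤ) := by exact_mod_cast h1
          omega
      have hyval : ∀ i, ((y i : ℤ)) = (x i : ℤ) - c i := fun i => Int.toNat_of_nonneg (hygeZ i)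
      have hyvalR : ∀ i, ((y i : ℝ)) = (x i : ℝ) - (c i : ℝ) := by
        intro i
        have h1 := congrArg (Int.cast : ℤ → ℝ) (hyval i)
        push_cast at h1
        exact h1
      have hsol : ∑ i, (y i : ℝ) • v i = b := by
        funext j
        rw [Finset.sum_apply]
        calc ∑ i, ((y i : ℝ) • v i) j = ∑ i, ((x i:ℝ) * v i j - (c i:ℝ) * v i j) := by
              refine Finset.sum_congr rfl fun i _ => ?_
              rw [Pi.smul_apply, smul_eq_mul, hyvalR i]; ring
          _ = ∑ i, (x i:ℝ) * v i j - ∑ i, (c i:ℝ) * v i j := by rw [Finset.sum_sub_distrib]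
          _ = b j := by rw [hxb j, hrel j]; ring
      have hlt : ∑ i, y i < ∑ i, x i := by
        have h1 : (∑ i, (y i:ℤ)) = ∑ i, (x i:ℤ) - ∑ i, c i := by
          rw [Finset.sum_congr rfl fun i _ => hyval i, Finset.sum_sub_distrib]
        have h2 : (∑ i, (y i:ℤ)) < ∑ i, (x i:ℤ) := by omega
        exact_mod_cast h2
      exact absurd (hminsum y hsol) (by omega)
  rcases le_or_gt 0 (∑ i, c i) with h | h
  · exact key c hc0 hsupp hrelc habs h
  · apply key (fun i => -(c i))
    · intro hcon
      apply hc0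
      funext i
      have := congrFun hcon i
      simpa using this
    · intro i hi
      exact hsupp i (by simpa using hi)
    · intro j
      have h1 := hrelc j
      calc ∑ i, ((-(c i) : ℤ) : ℝ) * v i j = -∑ i, (c i : ℝ) * v i j := by
            rw [← Finset.sum_neg_distrib]
            exact Finset.sum_congr rfl fun i _ => by push_cast; ring
        _ = 0 := by rw [h1]; ring
    · intro i
      have := habs i
      push_cast
      rwa [abs_neg]
    · have h1 : ∑ i, (-(c i)) = -∑ i, c i := by
        rw [← Finset.sum_neg_distrib]
      rw [h1]
      omega
end

section
/- Let S = (D, −, Σ, Σ₀, (D_a)_{a∈Σ}) be a signature with k directions and with a fixed linear order on D, and let A_* = (Q, T) be a star automaton over S with n states and s stars. Then there exists a signature S' with exactly k·n² directions and exactly s node labels, together with a bijection f from the set of pairs (G, C), where G is a graph over S and C is a computation of A_* on G, onto the set of all graphs over S', such that the graph f(G, C) has the same set of nodes as G, the same initial node, and the same edge structure as G (each edge of f(G, C) connects the same pair of nodes as the corresponding edge of G; only node labels and direction labels differ). -/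
section StarReduction

variable {S : Signature} {A : StarAutomaton S}

lemma SigGraph.mem_Da_of_edge_eq_some {S : Signature} (G : SigGraph S) {v : Fin G.n} {d : S.D}
    {u : Fin G.n} (h : G.edge v d = some u) : d ∈ S.Da (G.lab v) :=
  (G.edge_dom v d).mp (by simp [h])

lemma SigGraph.nbr_eq {S : Signature} (G : SigGraph S) {v : Fin G.n} {d : S.D} {u : Fin G.n}
    (he : G.edge v d = some u) (h : d ∈ S.Da (G.lab v)) : G.nbr v d h = u := by
  simp [SigGraph.nbr, he]

lemma SigGraph.edge_nbr {S : Signature} (G : SigGraph S) (v : Fin G.n) (d : S.D)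
    (h : d ∈ S.Da (G.lab v)) : G.edge v d = some (G.nbr v d h) := by
  simp [SigGraph.nbr]

/-- The signature `S'` of the star-automaton reduction: directions are triples
`(d, q, q')` and labels are the stars of `A`. -/
abbrev starSig (S : Signature) (A : StarAutomaton S) : Signature where
  D := S.D × A.Q × A.Q
  neg := fun x => (S.neg x.1, x.2.2, x.2.1)
  neg_neg := by intro x; simp [S.neg_neg]
  Lab := {t // t ∈ A.T}
  init := A.T.attach.filter fun t => t.1.1 ∈ S.init
  Da := fun t => (S.Da t.1.1).attach.image fun d => (d.1, t.1.2.1, t.1.2.2 d)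

lemma mem_starSig_Da (t : {t // t ∈ A.T}) (x : S.D × A.Q × A.Q) :
    x ∈ (starSig S A).Da t ↔
      ∃ h : x.1 ∈ S.Da t.1.1, x.2.1 = t.1.2.1 ∧ x.2.2 = t.1.2.2 ⟨x.1, h⟩ := by
  obtain ⟨d, p, r⟩ := x
  simp only [starSig, Finset.mem_image, Finset.mem_attach, true_and]
  constructor
  · rintro ⟨⟨e, he⟩, heq⟩
    obtain ⟨h1, h2, h3⟩ := Prod.mk.injEq .. ▸ heq
    cases h1
    obtain ⟨h2, h3⟩ := Prod.mk.injEq .. ▸ (Prod.mk.injEq .. ▸ heq).2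
    exact ⟨he, h2.symm, h3.symm⟩
  · rintro ⟨h, h1, h2⟩
    exact ⟨⟨d, h⟩, by rw [h1, h2]⟩

/-- Labelling of the reduced graph: each node gets its star. -/
def fwdLab (G : SigGraph S) (q : Fin G.n → A.Q) (hq : A.IsComputation G q)
    (v : Fin G.n) : {t // t ∈ A.T} :=
  ⟨⟨G.lab v, (q v, fun d => q (G.nbr v d.1 d.2))⟩, hq v⟩

/-- Edges of the reduced graph. -/
def fwdEdge (G : SigGraph S) (q : Fin G.n → A.Q) (v : Fin G.n)
    (x : S.D × A.Q × A.Q) : Option (Fin G.n) :=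
  if h : x.1 ∈ S.Da (G.lab v) then
    if x.2.1 = q v ∧ x.2.2 = q (G.nbr v x.1 h) then G.edge v x.1 else none
  else none

lemma fwdEdge_eq_some {G : SigGraph S} {q : Fin G.n → A.Q} {v : Fin G.n}
    {x : S.D × A.Q × A.Q} {u : Fin G.n} :
    fwdEdge G q v x = some u ↔ G.edge v x.1 = some u ∧ x.2.1 = q v ∧ x.2.2 = q u := by
  constructor
  · intro he
    unfold fwdEdge at he
    split_ifs at he with h h2
    obtain ⟨h21, h22⟩ := h2
    exact ⟨he, h21, h22.trans (congrArg q (G.nbr_eq he h))⟩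
  · rintro ⟨he, h1, h2⟩
    have h := G.mem_Da_of_edge_eq_some he
    have hnbr : G.nbr v x.1 h = u := G.nbr_eq he h
    unfold fwdEdge
    rw [dif_pos h, if_pos ⟨h1, by rw [hnbr]; exact h2⟩]
    exact he

/-- The reduced graph: same nodes and edges, labels and directions enriched with states. -/
abbrev fwdGraph (G : SigGraph S) (q : Fin G.n → A.Q) (hq : A.IsComputation G q) :
    SigGraph (starSig S A) where
  n := G.n
  v0 := G.v0
  edge := fwdEdge G q
  lab := fwdLab G q hq
  edge_sym := by
    intro v x u he
    rw [fwdEdge_eq_some] at he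
    obtain ⟨he, h1, h2⟩ := he
    have hs := G.edge_sym v x.1 u he
    have hu : S.neg x.1 ∈ S.Da (G.lab u) := G.mem_Da_of_edge_eq_some hs
    exact fwdEdge_eq_some.mpr ⟨hs, h2, h1⟩
  edge_dom := by
    intro v x
    rw [Option.isSome_iff_exists, mem_starSig_Da]
    constructor
    · rintro ⟨u, hu⟩
      rw [fwdEdge_eq_some] at hu
      obtain ⟨he, h1, h2⟩ := hu
      have h := G.mem_Da_of_edge_eq_some he
      exact ⟨h, h1, by show x.2.2 = q (G.nbr v x.1 h); rw [G.nbr_eq he h]; exact h2⟩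
    · rintro ⟨h, h1, h2⟩
      exact ⟨G.nbr v x.1 h, fwdEdge_eq_some.mpr ⟨G.edge_nbr v x.1 h, h1, h2⟩⟩
  init_iff := by
    intro v
    rw [← G.init_iff v]
    simp [starSig, fwdLab]

/-- Label of a node in the decoded graph. -/
def bwdLab (G' : SigGraph (starSig S A)) (v : Fin G'.n) : S.Lab := (G'.lab v).1.1

/-- State of a node in the decoded computation. -/
def bwdQ (G' : SigGraph (starSig S A)) (v : Fin G'.n) : A.Q := (G'.lab v).1.2.1

/-- Edges of the decoded graph. -/
def bwdEdge (G' : SigGraph (starSig S A)) (v : Fin G'.n) (d : S.D) : Option (Fin G'.n) :=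
  if h : d ∈ S.Da (G'.lab v).1.1 then
    G'.edge v (d, (G'.lab v).1.2.1, (G'.lab v).1.2.2 ⟨d, h⟩)
  else none

lemma bwdEdge_pos (G' : SigGraph (starSig S A)) (v : Fin G'.n) (d : S.D)
    (h : d ∈ S.Da (G'.lab v).1.1) :
    bwdEdge G' v d = G'.edge v (d, (G'.lab v).1.2.1, (G'.lab v).1.2.2 ⟨d, h⟩) :=
  dif_pos h

lemma bwdEdge_neg (G' : SigGraph (starSig S A)) (v : Fin G'.n) (d : S.D)
    (h : d ∉ S.Da (G'.lab v).1.1) : bwdEdge G' v d = none :=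
  dif_neg h

lemma bwd_consistent (G' : SigGraph (starSig S A)) {v u : Fin G'.n} {x : S.D × A.Q × A.Q}
    (he : G'.edge v x = some u) :
    ∃ h : S.neg x.1 ∈ S.Da (G'.lab u).1.1,
      x.2.2 = (G'.lab u).1.2.1 ∧ x.2.1 = (G'.lab u).1.2.2 ⟨S.neg x.1, h⟩ := by
  have h2 := G'.edge_sym v x u he
  have h3 := G'.mem_Da_of_edge_eq_some h2
  rw [mem_starSig_Da] at h3
  exact h3

/-- The decoded graph. -/
abbrev bwdGraph (G' : SigGraph (starSig S A)) : SigGraph S where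
  n := G'.n
  v0 := G'.v0
  edge := bwdEdge G'
  lab := bwdLab G'
  edge_sym := by
    intro v d u he
    unfold bwdEdge at he
    split_ifs at he with h
    obtain ⟨h2, hc1, hc2⟩ := bwd_consistent G' he
    have hs := G'.edge_sym v _ u he
    rw [bwdEdge_pos G' u (S.neg d) h2]
    rw [← hc1, ← hc2]
    exact hs
  edge_dom := by
    intro v d
    by_cases h : d ∈ S.Da (G'.lab v).1.1
    · rw [bwdEdge_pos G' v d h]
      rw [G'.edge_dom]
      exact iff_of_true (mem_starSig_Da _ _ |>.mpr ⟨h, rfl, rfl⟩) h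
    · rw [bwdEdge_neg G' v d h]
      simp [bwdLab, h]
  init_iff := by
    intro v
    rw [← G'.init_iff v]
    simp [starSig, bwdLab]

lemma bwd_nbr_state (G' : SigGraph (starSig S A)) (v : Fin G'.n) :
    (fun d : {d // d ∈ S.Da ((bwdGraph G').lab v)} =>
      bwdQ G' ((bwdGraph G').nbr v d.1 d.2)) = (G'.lab v).1.2.2 := by
  funext d
  obtain ⟨d, hd⟩ := d
  have he : (bwdGraph G').edge v d = some ((bwdGraph G').nbr v d hd) :=
    (bwdGraph G').edge_nbr v d hd
  have he' : G'.edge v (d, (G'.lab v).1.2.1, (G'.lab v).1.2.2 ⟨d, hd⟩)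
      = some ((bwdGraph G').nbr v d hd) := by
    rw [← bwdEdge_pos G' v d hd]
    exact he
  obtain ⟨h2, hc1, hc2⟩ := bwd_consistent G' he'
  exact hc1.symm

lemma bwd_comp (G' : SigGraph (starSig S A)) : A.IsComputation (bwdGraph G') (bwdQ G') := by
  intro v
  rw [bwd_nbr_state G' v]
  exact (G'.lab v).2

theorem SigGraph.ext2 {S : Signature} : ∀ {G H : SigGraph S}, G.n = H.n → HEq G.v0 H.v0 →
    HEq G.edge H.edge → HEq G.lab H.lab → G = H := by
  rintro ⟨n1, v1, e1, l1, p1, p2, p3⟩ ⟨n2, v2, e2, l2, r1, r2, r3⟩ h0 h1 h2 h3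
  cases h0; cases h1; cases h2; cases h3; rfl

lemma bwd_fwd (G : SigGraph S) (q : Fin G.n → A.Q) (hq : A.IsComputation G q) :
    bwdGraph (fwdGraph G q hq) = G := by
  refine SigGraph.ext2 rfl HEq.rfl ?_ ?_
  · apply heq_of_eq
    funext v d
    show bwdEdge (fwdGraph G q hq) v d = G.edge v d
    by_cases h : d ∈ S.Da (G.lab v)
    · rw [bwdEdge_pos (fwdGraph G q hq) v d h]
      rw [G.edge_nbr v d h]
      exact fwdEdge_eq_some.mpr ⟨G.edge_nbr v d h, rfl, rfl⟩
    · rw [bwdEdge_neg (fwdGraph G q hq) v d h]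
      symm
      rw [← Option.not_isSome_iff_eq_none, G.edge_dom]
      exact h
  · exact HEq.rfl

lemma fwd_bwd (G' : SigGraph (starSig S A)) :
    fwdGraph (bwdGraph G') (bwdQ G') (bwd_comp G') = G' := by
  have hlab : ∀ v, fwdLab (bwdGraph G') (bwdQ G') (bwd_comp G') v = G'.lab v := by
    intro v
    apply Subtype.ext
    show (⟨(bwdGraph G').lab v, (bwdQ G' v, fun d => bwdQ G' ((bwdGraph G').nbr v d.1 d.2))⟩
        : Σ a : S.Lab, A.Q × ({d // d ∈ S.Da a} → A.Q)) = (G'.lab v).1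
    rw [bwd_nbr_state G' v]
    rfl
  have hedge : ∀ v x, fwdEdge (bwdGraph G') (bwdQ G') v x = G'.edge v x := by
    intro v x
    obtain ⟨d, p, r⟩ := x
    by_cases hx : (d, p, r) ∈ (starSig S A).Da (G'.lab v)
    · have hx' := hx
      rw [mem_starSig_Da] at hx'
      obtain ⟨h, h1, h2⟩ := hx'
      obtain ⟨u, hu⟩ := Option.isSome_iff_exists.mp ((G'.edge_dom v _).mpr hx)
      rw [hu]
      apply fwdEdge_eq_some.mpr
      refine ⟨?_, h1, ?_⟩
      · show bwdEdge G' v d = some u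
        rw [bwdEdge_pos G' v d h]
        rw [← h1, ← h2]
        exact hu
      · obtain ⟨h2', hc1, hc2⟩ := bwd_consistent G' hu
        exact hc1
    · have h1 : G'.edge v (d, p, r) = none := by
        rw [← Option.not_isSome_iff_eq_none, G'.edge_dom]
        exact hx
      rw [h1, ← Option.not_isSome_iff_eq_none]
      intro hs
      exact hx (by
        rw [← hlab v]
        exact ((fwdGraph (bwdGraph G') (bwdQ G') (bwd_comp G')).edge_dom v (d, p, r)).mp hs)
  refine SigGraph.ext2 rfl HEq.rfl ?_ ?_
  · exact heq_of_eq (funext fun v => funext fun x => hedge v x)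
  · exact heq_of_eq (funext hlab)

lemma sig_pair_ext {p q : Σ G : SigGraph S, {f : Fin G.n → A.Q // A.IsComputation G f}}
    (h1 : p.1 = q.1) (h2 : HEq p.2.1 q.2.1) : p = q := by
  obtain ⟨G1, a, ha⟩ := p
  obtain ⟨G2, b, hb⟩ := q
  cases h1
  simp only at h2
  cases h2
  rfl

end StarReduction

/-- Reduction of a star automaton to a signature: for a signature `S` with `k` directions
and a star automaton `A` over `S` with `n` states and `s` stars, there is a signature `S'`
with exactly `k·n²` directions and exactly `s` node labels, and a bijection `f` from pairs
`(G, C)` — a graph `G` over `S` together with a computation `C` of `A` on `G` — onto the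
graphs over `S'`, such that `f (G, C)` has the same nodes, the same initial node, and the
same edge structure as `G`. -/
theorem stmt8 (S : Signature) (A : StarAutomaton S) (k n s : ℕ)
    (hk : Fintype.card S.D = k) (hn : Fintype.card A.Q = n) (hs : A.T.card = s) :
    ∃ S' : Signature,
      Fintype.card S'.D = k * n ^ 2 ∧
      Fintype.card S'.Lab = s ∧
      ∃ f : (Σ G : SigGraph S, {q : Fin G.n → A.Q // A.IsComputation G q}) ≃ SigGraph S',
        ∀ p, SameSkeleton p.1 (f p) := by
  classical
  refine ⟨starSig S A, ?_, ?_, ?_⟩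
  · calc Fintype.card (starSig S A).D
        = Fintype.card (S.D × A.Q × A.Q) := Fintype.card_congr (Equiv.refl _)
      _ = k * n ^ 2 := by
          rw [Fintype.card_prod, Fintype.card_prod, hk, hn]; ring
  · calc Fintype.card (starSig S A).Lab
        = Fintype.card {t // t ∈ A.T} := Fintype.card_congr (Equiv.refl _)
      _ = A.T.card := Fintype.card_coe _
      _ = s := hs
  · refine ⟨⟨fun p => fwdGraph p.1 p.2.1 p.2.2,
      fun G' => ⟨bwdGraph G', bwdQ G', bwd_comp G'⟩, ?_, ?_⟩, ?_⟩
    · rintro ⟨G, q, hq⟩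
      exact sig_pair_ext (bwd_fwd G q hq) HEq.rfl
    · intro G'
      exact fwd_bwd G'
    · rintro ⟨G, q, hq⟩
      refine ⟨rfl, rfl, fun u w => ?_⟩
      simp only [Fin.cast_eq_self]
      apply Finset.card_bij (fun d _ => ((d, q u, q w) : S.D × A.Q × A.Q))
      · intro d hd
        rw [Finset.mem_filter] at hd ⊢
        refine ⟨Finset.mem_univ _, ?_⟩
        exact fwdEdge_eq_some.mpr ⟨hd.2, rfl, rfl⟩
      · intro d1 _ d2 _ h
        exact congrArg Prod.fst h
      · intro x hx
        rw [Finset.mem_filter] at hx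
        have hx2 : fwdEdge G q u x = some w := hx.2
        rw [fwdEdge_eq_some] at hx2
        obtain ⟨he, h1, h2⟩ := hx2
        refine ⟨x.1, Finset.mem_filter.mpr ⟨Finset.mem_univ _, he⟩, ?_⟩
        obtain ⟨d, p, r⟩ := x
        simp only at h1 h2 ⊢
        rw [h1, h2]
end

section
/- For every graph-walking automaton A = (Q, q₀, F, δ) with n states over a signature S = (D, −, Σ, Σ₀, (D_a)_{a∈Σ}) with k directions and m node labels, there exists a star automaton A_* = (P, T) over the same signature S, with (k+1)^n states and at most m·(k+1)^{n(k+1)} stars, which accepts exactly the same graphs as A. -/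
namespace Stmt10Aux

variable {S : Signature} (A : GWA S) (G : SigGraph S)

/-- Deterministic one-step function of a GWA on a graph. -/
def stepFn (c : A.Q × Fin G.n) : Option (A.Q × Fin G.n) :=
  (A.δ (c.1, G.lab c.2)).bind fun p => (G.edge c.2 p.2).map fun u => (p.1, u)

lemma edge_eq_some_nbr (v : Fin G.n) (d : S.D) (h : d ∈ S.Da (G.lab v)) :
    G.edge v d = some (G.nbr v d h) := (Option.some_get _).symm

lemma nbr_eq {v u : Fin G.n} {d : S.D} (h : d ∈ S.Da (G.lab v))
    (hu : G.edge v d = some u) : G.nbr v d h = u := by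
  have h2 := edge_eq_some_nbr G v d h
  rw [hu] at h2
  exact (Option.some_injective _ h2).symm

lemma stepFn_of_δ (c : A.Q × Fin G.n) {q' : A.Q} {d : S.D}
    (hδ : A.δ (c.1, G.lab c.2) = some (q', d)) (h : d ∈ S.Da (G.lab c.2)) :
    stepFn A G c = some (q', G.nbr c.2 d h) := by
  unfold stepFn
  rw [hδ, Option.bind_some, edge_eq_some_nbr G c.2 d h, Option.map_some]

lemma stepFn_some_elim {c e : A.Q × Fin G.n} (h : stepFn A G c = some e) :
    ∃ (d : S.D) (hd : d ∈ S.Da (G.lab c.2)),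
      A.δ (c.1, G.lab c.2) = some (e.1, d) ∧ e.2 = G.nbr c.2 d hd := by
  unfold stepFn at h
  rcases hδ : A.δ (c.1, G.lab c.2) with _ | ⟨q', d⟩ <;> rw [hδ] at h
  · simp at h
  · rw [Option.bind_some] at h
    rcases Option.map_eq_some_iff.mp h with ⟨u, hu, he⟩
    have hd : d ∈ S.Da (G.lab c.2) := A.δ_dir _ _ _ hδ
    refine ⟨d, hd, ?_, ?_⟩
    · rw [← he]
    · rw [← he, nbr_eq G hd hu]

lemma step_iff {c c' : A.Q × Fin G.n} :
    A.Step G c c' ↔ stepFn A G c = some c' := by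
  constructor
  · rintro ⟨q', d, h, hδ, rfl⟩
    exact stepFn_of_δ A G c hδ h
  · intro h
    obtain ⟨d, hd, hδ, he⟩ := stepFn_some_elim A G h
    exact ⟨c'.1, d, hd, hδ, by rw [← he]⟩

/-- The run of the GWA, as a sequence of optional configurations. -/
def run : ℕ → Option (A.Q × Fin G.n)
  | 0 => some (A.q0, G.v0)
  | (i+1) => (run i).bind (stepFn A G)

lemma run_succ (i : ℕ) : run A G (i+1) = (run A G i).bind (stepFn A G) := rfl

lemma reach_of_run {i : ℕ} {c : A.Q × Fin G.n} (h : run A G i = some c) :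
    Relation.ReflTransGen (A.Step G) (A.q0, G.v0) c := by
  induction i generalizing c with
  | zero =>
    have : (A.q0, G.v0) = c := Option.some_injective _ h
    rw [← this]
  | succ i ih =>
    rw [run_succ] at h
    rcases Option.bind_eq_some_iff.mp h with ⟨b, hb, hstep⟩
    exact (ih hb).tail ((step_iff A G).mpr hstep)

lemma run_of_reach {c : A.Q × Fin G.n}
    (h : Relation.ReflTransGen (A.Step G) (A.q0, G.v0) c) :
    ∃ i, run A G i = some c := by
  induction h with
  | refl => exact ⟨0, rfl⟩
  | tail _ hstep ih =>
    obtain ⟨i, hi⟩ := ih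
    exact ⟨i+1, by rw [run_succ, hi, Option.bind_some]; exact (step_iff A G).mp hstep⟩

lemma run_none_mono {i : ℕ} (h : run A G i = none) (t : ℕ) : run A G (i+t) = none := by
  induction t with
  | zero => exact h
  | succ t ih => rw [show i + (t+1) = (i+t)+1 by omega, run_succ, ih, Option.bind_none]

lemma run_shift {i j : ℕ} (h : run A G i = run A G j) (t : ℕ) :
    run A G (i+t) = run A G (j+t) := by
  induction t with
  | zero => exact h
  | succ t ih =>
    rw [show i + (t+1) = (i+t)+1 by omega, show j + (t+1) = (j+t)+1 by omega,
      run_succ, run_succ, ih]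

lemma delta_none_of_F {q : A.Q} {a : S.Lab} (h : (q, a) ∈ A.F) : A.δ (q, a) = none := by
  rcases hδ : A.δ (q, a) with _ | p
  · rfl
  · exact absurd h (A.δ_not_F _ _ _ hδ)

lemma stepFn_none_of_F {c : A.Q × Fin G.n} (h : (c.1, G.lab c.2) ∈ A.F) :
    stepFn A G c = none := by
  unfold stepFn
  rw [delta_none_of_F A h, Option.bind_none]

lemma stepFn_isSome_of_δ {c : A.Q × Fin G.n} {q' : A.Q} {d : S.D}
    (hδ : A.δ (c.1, G.lab c.2) = some (q', d)) : ∃ e, stepFn A G c = some e :=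
  ⟨_, stepFn_of_δ A G c hδ (A.δ_dir _ _ _ hδ)⟩

lemma accepts_iff :
    A.Accepts G ↔ ∃ i c, run A G i = some c ∧ (c.1, G.lab c.2) ∈ A.F := by
  constructor
  · rintro ⟨c, hr, hF⟩
    obtain ⟨i, hi⟩ := run_of_reach A G hr
    exact ⟨i, c, hi, hF⟩
  · rintro ⟨i, c, hi, hF⟩
    exact ⟨c, reach_of_run A G hi, hF⟩

/-- Whether a state is "claimed" (visited by the run) at a node with label `a`
and marker assignment `f`. -/
def Claimed (a : S.Lab) (f : A.Q → Option S.D) (q : A.Q) : Prop :=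
  f q ≠ none ∨ (a ∈ S.init ∧ q = A.q0)

/-- The local consistency condition of a star. -/
def StarOK (a : S.Lab) (f : A.Q → Option S.D)
    (g : {d // d ∈ S.Da a} → A.Q → Option S.D) : Prop :=
  (a ∈ S.init → f A.q0 = none) ∧
  (∀ q, Claimed A a f q →
    ((q, a) ∈ A.F ∨ ∃ (q' : A.Q) (d : S.D) (h : d ∈ S.Da a),
      A.δ (q, a) = some (q', d) ∧ g ⟨d, h⟩ q' = some d)) ∧
  (∀ q₁ q₂ q' d, Claimed A a f q₁ → Claimed A a f q₂ →
    A.δ (q₁, a) = some (q', d) → A.δ (q₂, a) = some (q', d) → q₁ = q₂)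

lemma complete (hAcc : A.Accepts G) :
    ∃ p : Fin G.n → (A.Q → Option S.D),
      ∀ v : Fin G.n, StarOK A (G.lab v) (p v)
        (fun d : {d // d ∈ S.Da (G.lab v)} => p (G.nbr v d.1 d.2)) := by
  classical
  obtain ⟨N, cN, hN, hF⟩ := (accepts_iff A G).mp hAcc
  have hNone : ∀ t, run A G (N+1+t) = none := by
    have h1 : run A G (N+1) = none := by
      rw [run_succ, hN, Option.bind_some, stepFn_none_of_F A G hF]
    exact fun t => run_none_mono A G h1 t
  -- the run never repeats a configuration
  have runInj : ∀ i j c, run A G i = some c → run A G j = some c → i = j := by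
    suffices H : ∀ i j c, i < j → run A G i = some c → run A G j = some c → False by
      intro i j c hi hj
      rcases lt_trichotomy i j with h | h | h
      · exact absurd (H i j c h hi hj) not_false
      · exact h
      · exact absurd (H j i c h hj hi) not_false
    intro i j c hij hi hj
    have key : ∀ s, run A G (i + s*(j-i)) = some c := by
      intro s
      induction s with
      | zero => simpa using hi
      | succ s ih =>
        have h2 := run_shift A G (ih.trans hi.symm) (j - i)
        have h3 : i + (j - i) = j := by omega
        rw [h3, hj] at h2
        have h4 : i + (s+1)*(j-i) = i + s*(j-i) + (j-i) := by ring
        rw [h4, h2]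
    have h5 := key (N+1)
    have hge : N+1 ≤ i + (N+1)*(j-i) := by
      have h1 : 1 ≤ j - i := by omega
      calc N+1 = (N+1)*1 := by ring
        _ ≤ (N+1)*(j-i) := Nat.mul_le_mul_left _ h1
        _ ≤ i + (N+1)*(j-i) := Nat.le_add_left _ _
    have h6 : run A G (i + (N+1)*(j-i)) = none := by
      have h7 : i + (N+1)*(j-i) = (N+1) + (i + (N+1)*(j-i) - (N+1)) := by omega
      rw [h7]; exact hNone _
    rw [h6] at h5; exact nomatch h5
  have visited_le : ∀ i c, run A G i = some c → i ≤ N := by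
    intro i c h
    by_contra hlt
    have h7 : i = (N+1) + (i - (N+1)) := by omega
    rw [h7, hNone] at h; exact nomatch h
  have stepInj : ∀ c₁ c₂ e, (∃ i, run A G i = some c₁) → (∃ j, run A G j = some c₂) →
      stepFn A G c₁ = some e → stepFn A G c₂ = some e → c₁ = c₂ := by
    rintro c₁ c₂ e ⟨i, hi⟩ ⟨j, hj⟩ h1 h2
    have e1 : run A G (i+1) = some e := by rw [run_succ, hi, Option.bind_some, h1]
    have e2 : run A G (j+1) = some e := by rw [run_succ, hj, Option.bind_some, h2]
    have hij : i = j := by have := runInj _ _ _ e1 e2; omega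
    subst hij
    rw [hi] at hj
    exact Option.some_injective _ hj
  set p : Fin G.n → A.Q → Option S.D := fun v q =>
    if h : ∃ c, (∃ i, run A G i = some c) ∧ stepFn A G c = some (q, v)
    then (A.δ ((Classical.choose h).1, G.lab (Classical.choose h).2)).map Prod.snd
    else none with hp
  have p_spec : ∀ (v : Fin G.n) (q : A.Q) (c : A.Q × Fin G.n) (i : ℕ),
      run A G i = some c → stepFn A G c = some (q, v) → ∃ d, A.δ (c.1, G.lab c.2) = some (q, d) ∧ p v q = some d := by
    intro v q c i hi hstep
    obtain ⟨d, hd, hδ, _⟩ := stepFn_some_elim A G hstep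
    refine ⟨d, hδ, ?_⟩
    have hex : ∃ c, (∃ i, run A G i = some c) ∧ stepFn A G c = some (q, v) :=
      ⟨c, ⟨i, hi⟩, hstep⟩
    have hc0 := Classical.choose_spec hex
    have hceq : Classical.choose hex = c := by
      obtain ⟨hvis, hst⟩ := hc0
      exact stepInj _ _ _ hvis ⟨i, hi⟩ hst hstep
    rw [hp]
    simp only [dif_pos hex, hceq, hδ, Option.map_some]
  have p_ne_none : ∀ (v : Fin G.n) (q : A.Q), p v q ≠ none → ∃ i, run A G i = some (q, v) := by
    intro v q hne
    rw [hp] at hne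
    by_cases hex : ∃ c, (∃ i, run A G i = some c) ∧ stepFn A G c = some (q, v)
    · obtain ⟨⟨i, hi⟩, hst⟩ := Classical.choose_spec hex
      exact ⟨i+1, by rw [run_succ, hi, Option.bind_some, hst]⟩
    · simp only [dif_neg hex] at hne
      exact absurd rfl hne
  have p_v0_q0 : p G.v0 A.q0 = none := by
    rw [hp]
    refine dif_neg ?_
    rintro ⟨c, ⟨i, hi⟩, hst⟩
    have h0 : run A G (i+1) = some (A.q0, G.v0) := by
      rw [run_succ, hi, Option.bind_some, hst]
    have h1 : run A G 0 = some (A.q0, G.v0) := rfl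
    have := runInj _ _ _ h0 h1
    omega
  have claimed_visited : ∀ (v : Fin G.n) (q : A.Q),
      Claimed A (G.lab v) (p v) q → ∃ i, run A G i = some (q, v) := by
    intro v q hcl
    rcases hcl with hne | ⟨hin, hq⟩
    · exact p_ne_none v q hne
    · have hv : v = G.v0 := (G.init_iff v).mp hin
      subst hv; subst hq
      exact ⟨0, rfl⟩
  refine ⟨p, fun v => ⟨?_, ?_, ?_⟩⟩
  · intro hin
    have hv : v = G.v0 := (G.init_iff v).mp hin
    subst hv
    exact p_v0_q0
  · intro q hcl
    obtain ⟨i, hi⟩ := claimed_visited v q hcl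
    by_cases hqF : (q, G.lab v) ∈ A.F
    · exact Or.inl hqF
    · right
      have hiN : i ≤ N := visited_le _ _ hi
      have hilt : i < N := by
        rcases Nat.lt_or_ge i N with h | h
        · exact h
        · exfalso
          have : i = N := by omega
          subst this
          rw [hN] at hi
          have : cN = (q, v) := Option.some_injective _ hi
          rw [this] at hF
          exact hqF hF
      have hsome : ∃ e, run A G (i+1) = some e := by
        rcases he : run A G (i+1) with _ | e
        · exfalso
          have h7 : N = (i+1) + (N - (i+1)) := by omega
          have := run_none_mono A G he (N - (i+1))
          rw [← h7, hN] at this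
          exact nomatch this
        · exact ⟨e, rfl⟩
      obtain ⟨e, he⟩ := hsome
      have hstep : stepFn A G (q, v) = some e := by
        rw [run_succ, hi, Option.bind_some] at he
        exact he
      obtain ⟨d, hd, hδ, he2⟩ := stepFn_some_elim A G hstep
      refine ⟨e.1, d, hd, hδ, ?_⟩
      have hstep' : stepFn A G (q, v) = some (e.1, G.nbr v d hd) := by
        rw [hstep]; exact congrArg some (Prod.ext rfl he2)
      obtain ⟨d', hδ', hpv⟩ := p_spec (G.nbr v d hd) e.1 (q, v) i hi hstep'
      have : d' = d := by
        rw [hδ] at hδ'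
        exact (Prod.mk.injEq _ _ _ _).mp (Option.some_injective _ hδ'.symm) |>.2
      show p (G.nbr v d hd) e.1 = some d
      rw [hpv, this]
  · intro q₁ q₂ q' d hcl₁ hcl₂ hδ₁ hδ₂
    obtain ⟨i₁, hi₁⟩ := claimed_visited v q₁ hcl₁
    obtain ⟨i₂, hi₂⟩ := claimed_visited v q₂ hcl₂
    have hd : d ∈ S.Da (G.lab v) := A.δ_dir _ _ _ hδ₁
    have hs₁ : stepFn A G (q₁, v) = some (q', G.nbr v d hd) := stepFn_of_δ A G (q₁, v) hδ₁ hd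
    have hs₂ : stepFn A G (q₂, v) = some (q', G.nbr v d hd) := stepFn_of_δ A G (q₂, v) hδ₂ hd
    have := stepInj _ _ _ ⟨i₁, hi₁⟩ ⟨i₂, hi₂⟩ hs₁ hs₂
    exact (Prod.mk.injEq _ _ _ _).mp this |>.1

lemma sound
    (h : ∃ p : Fin G.n → (A.Q → Option S.D),
      ∀ v : Fin G.n, StarOK A (G.lab v) (p v)
        (fun d : {d // d ∈ S.Da (G.lab v)} => p (G.nbr v d.1 d.2))) :
    A.Accepts G := by
  classical
  obtain ⟨p, hp⟩ := h
  set Cl : (A.Q × Fin G.n) → Prop := fun c => Claimed A (G.lab c.2) (p c.2) c.1 with hCl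
  have H1 : ∀ c, Cl c →
      ((c.1, G.lab c.2) ∈ A.F ∨ ∃ (q' : A.Q) (d : S.D) (hd : d ∈ S.Da (G.lab c.2)),
        A.δ (c.1, G.lab c.2) = some (q', d) ∧ p (G.nbr c.2 d hd) q' = some d) := by
    intro c hc
    exact (hp c.2).2.1 c.1 hc
  have H1' : ∀ c, Cl c → (c.1, G.lab c.2) ∉ A.F → ∃ e, stepFn A G c = some e := by
    intro c hc hF
    rcases H1 c hc with h | ⟨q', d, hd, hδ, hm⟩
    · exact absurd h hF
    · exact ⟨(q', G.nbr c.2 d hd), stepFn_of_δ A G c hδ hd⟩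
  have Hmark : ∀ c e, Cl c → stepFn A G c = some e →
      ∃ d, A.δ (c.1, G.lab c.2) = some (e.1, d) ∧ G.edge c.2 d = some e.2 ∧
        p e.2 e.1 = some d := by
    intro c e hc hstep
    obtain ⟨d, hd, hδ, he⟩ := stepFn_some_elim A G hstep
    have hF : (c.1, G.lab c.2) ∉ A.F := A.δ_not_F _ _ _ hδ
    rcases H1 c hc with h | ⟨q', d', hd', hδ', hm⟩
    · exact absurd h hF
    · rw [hδ] at hδ'
      have hq : e.1 = q' ∧ d = d' := by
        have := Option.some_injective _ hδ'
        exact ⟨congrArg Prod.fst this, congrArg Prod.snd this⟩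
      obtain ⟨hq1, hq2⟩ := hq
      subst hq1; subst hq2
      refine ⟨d, hδ, ?_, ?_⟩
      · rw [he]; exact edge_eq_some_nbr G c.2 d hd
      · rw [he]; exact hm
  have H3 : ∀ c, Cl c → stepFn A G c = some (A.q0, G.v0) → False := by
    intro c hc hstep
    obtain ⟨d, _, _, hm⟩ := Hmark c _ hc hstep
    have h0 : p G.v0 A.q0 = none := (hp G.v0).1 ((G.init_iff G.v0).mpr rfl)
    rw [h0] at hm
    exact nomatch hm
  have H2 : ∀ c₁ c₂ e, Cl c₁ → Cl c₂ → stepFn A G c₁ = some e → stepFn A G c₂ = some e →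
      c₁ = c₂ := by
    intro c₁ c₂ e hc₁ hc₂ h₁ h₂
    obtain ⟨d₁, hδ₁, hedge₁, hm₁⟩ := Hmark c₁ e hc₁ h₁
    obtain ⟨d₂, hδ₂, hedge₂, hm₂⟩ := Hmark c₂ e hc₂ h₂
    have hd12 : d₁ = d₂ := by
      rw [hm₁] at hm₂
      exact Option.some_injective _ hm₂
    subst hd12
    have hv₁ : G.edge e.2 (S.neg d₁) = some c₁.2 := G.edge_sym _ _ _ hedge₁
    have hv₂ : G.edge e.2 (S.neg d₁) = some c₂.2 := G.edge_sym _ _ _ hedge₂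
    have hv : c₁.2 = c₂.2 := by
      rw [hv₁] at hv₂
      exact Option.some_injective _ hv₂
    have hq : c₁.1 = c₂.1 := by
      refine (hp c₁.2).2.2 c₁.1 c₂.1 e.1 d₁ hc₁ ?_ hδ₁ ?_
      · rw [hCl] at hc₂; rw [← hv] at hc₂; exact hc₂
      · rw [← hv] at hδ₂; exact hδ₂
    exact Prod.ext hq hv
  have L1 : ∀ i c, run A G i = some c → Cl c := by
    intro i
    induction i with
    | zero =>
      intro c h
      have : (A.q0, G.v0) = c := Option.some_injective _ h
      subst this
      exact Or.inr ⟨(G.init_iff G.v0).mpr rfl, rfl⟩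
    | succ i ih =>
      intro c h
      rw [run_succ] at h
      rcases Option.bind_eq_some_iff.mp h with ⟨b, hb, hstep⟩
      obtain ⟨d, _, _, hm⟩ := Hmark b c (ih b hb) hstep
      exact Or.inl (by rw [hm]; exact nofun)
  have L2 : ∀ j i c, i < j → run A G i = some c → run A G j = some c → False := by
    intro j
    induction j using Nat.strong_induction_on with
    | _ j IH =>
      intro i c hij hi hj
      rcases j with _ | j'
      · omega
      · rw [run_succ] at hj
        rcases Option.bind_eq_some_iff.mp hj with ⟨b₂, hb₂, hs₂⟩
        rcases i with _ | i'
        · have : (A.q0, G.v0) = c := Option.some_injective _ hi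
          subst this
          exact H3 b₂ (L1 _ _ hb₂) hs₂
        · rw [run_succ] at hi
          rcases Option.bind_eq_some_iff.mp hi with ⟨b₁, hb₁, hs₁⟩
          have hb : b₁ = b₂ := H2 b₁ b₂ c (L1 _ _ hb₁) (L1 _ _ hb₂) hs₁ hs₂
          subst hb
          exact IH j' (by omega) i' b₁ (by omega) hb₁ hb₂
  by_cases hnone : ∃ i, run A G i = none
  · have hi0 : run A G (Nat.find hnone) = none := Nat.find_spec hnone
    have hne : Nat.find hnone ≠ 0 := by
      intro h
      rw [h] at hi0
      exact nomatch hi0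
    obtain ⟨t, ht⟩ : ∃ t, Nat.find hnone = t+1 := ⟨Nat.find hnone - 1, by omega⟩
    have hts : run A G t ≠ none := Nat.find_min hnone (by omega)
    rcases hc : run A G t with _ | c
    · exact absurd hc hts
    have hstep : stepFn A G c = none := by
      have h9 := hi0
      rw [ht, run_succ, hc, Option.bind_some] at h9
      exact h9
    have hCl' := L1 t c hc
    by_cases hF : (c.1, G.lab c.2) ∈ A.F
    · exact ⟨c, reach_of_run A G hc, hF⟩
    · exfalso
      obtain ⟨e, he⟩ := H1' c hCl' hF
      rw [hstep] at he
      exact nomatch he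
  · push_neg at hnone
    exfalso
    set C := Fintype.card (A.Q × Fin G.n) with hC
    have hf : ∀ i : Fin (C+1), ∃ c, run A G i.1 = some c := by
      intro i
      rcases h : run A G i.1 with _ | c
      · exact absurd h (hnone i.1)
      · exact ⟨c, rfl⟩
    choose f hfs using hf
    have finj : Function.Injective f := by
      intro a b hab
      have ha := hfs a
      have hb := hfs b
      rw [hab] at ha
      have : a.1 = b.1 := by
        rcases lt_trichotomy a.1 b.1 with h | h | h
        · exact absurd (L2 b.1 a.1 (f b) h ha hb) not_false
        · exact h
        · exact absurd (L2 a.1 b.1 (f b) h hb ha) not_false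
      exact Fin.ext this
    have := Fintype.card_le_of_injective f finj
    rw [Fintype.card_fin] at this
    omega

end Stmt10Aux

/-- For every graph-walking automaton `A` with `n` states over a signature `S` with `k`
directions and `m` node labels, there is a star automaton over the same signature `S`,
with `(k+1)^n` states and at most `m·(k+1)^(n(k+1))` stars, accepting exactly the same
graphs as `A`. -/
theorem stmt10 (S : Signature) (A : GWA S) (n k m : ℕ)
    (hn : Fintype.card A.Q = n) (hk : Fintype.card S.D = k)
    (hm : Fintype.card S.Lab = m) :
    ∃ B : StarAutomaton S,
      Fintype.card B.Q = (k + 1) ^ n ∧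
      B.T.card ≤ m * (k + 1) ^ (n * (k + 1)) ∧
      ∀ G : SigGraph S, A.Accepts G ↔ B.Accepts G := by
  classical
  refine ⟨{ Q := A.Q → Option S.D
            fintypeQ := inferInstance
            decEqQ := inferInstance
            T := Finset.univ.filter
              (fun x : Σ a : S.Lab, (A.Q → Option S.D) × ({d // d ∈ S.Da a} → A.Q → Option S.D) =>
                Stmt10Aux.StarOK A x.1 x.2.1 x.2.2) }, ?_, ?_, ?_⟩
  · simp only [Fintype.card_fun, Fintype.card_option, hn, hk]
  · calc (Finset.univ.filter
        (fun x : Σ a : S.Lab, (A.Q → Option S.D) × ({d // d ∈ S.Da a} → A.Q → Option S.D) =>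
          Stmt10Aux.StarOK A x.1 x.2.1 x.2.2)).card
        ≤ Fintype.card (Σ a : S.Lab,
            (A.Q → Option S.D) × ({d // d ∈ S.Da a} → A.Q → Option S.D)) := by
          rw [← Finset.card_univ]
          exact Finset.card_filter_le _ _
      _ = ∑ a : S.Lab, (k+1)^n * ((k+1)^n)^((S.Da a).card) := by
          rw [Fintype.card_sigma]
          refine Finset.sum_congr rfl fun a _ => ?_
          simp [Fintype.card_prod, Fintype.card_fun, Fintype.card_option, hn, hk,
            Fintype.card_coe]
      _ ≤ ∑ _a : S.Lab, (k+1)^(n*(k+1)) := by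
          refine Finset.sum_le_sum fun a _ => ?_
          rw [← pow_mul, ← pow_add]
          refine Nat.pow_le_pow_right (by omega) ?_
          have h1 : (S.Da a).card ≤ k := by
            rw [← hk]
            exact Finset.card_le_univ _
          have h2 : n * (S.Da a).card ≤ n * k := Nat.mul_le_mul_left n h1
          nlinarith
      _ = m * (k+1)^(n*(k+1)) := by
          rw [Finset.sum_const, Finset.card_univ, hm, smul_eq_mul]
  · intro G
    constructor
    · intro hAcc
      obtain ⟨p, hp⟩ := Stmt10Aux.complete A G hAcc
      exact ⟨p, fun v => Finset.mem_filter.mpr ⟨Finset.mem_univ _, hp v⟩⟩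
    · rintro ⟨p, hp⟩
      exact Stmt10Aux.sound A G ⟨p, fun v => (Finset.mem_filter.mp (hp v)).2⟩
end
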